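/- arXiv:1912.03674 — 5 statements merged into one kernel-verified Lean document; each statement's English description precedes it below -/
import Mathlib

section
/- For every integer n ≥ 1 and every pattern pair p ∈ {(012,201), (012,210)}, the number of inversion sequences of length n avoiding both patterns of p equals 2^{n+1} − binom(n+1,3) − 2n − 1, i.e. |I_n(p)| = 2^{n+1} − binom(n+1,3) − 2n − 1. -/
/-- An inversion sequence of length `n` (0-indexed): `e i ≤ i` for all `i`. -/
def InvSeq {n : ℕ} (e : Fin n → ℕ) : Prop := ∀ i : Fin n, e i ≤ (i : ℕ)

/-- `e` contains the pattern `p` (a word of nonnegative integers): there is a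
strictly increasing choice of positions on which `e` is order-isomorphic to `p`. -/
def Contains {n : ℕ} (e : Fin n → ℕ) (p : List ℕ) : Prop :=
  ∃ s : Fin p.length → Fin n, StrictMono s ∧
    ∀ a b : Fin p.length,
      (p.get a < p.get b ↔ e (s a) < e (s b)) ∧
      (p.get a = p.get b ↔ e (s a) = e (s b))

/-- `e` avoids the pattern `p`. -/
def Avoids {n : ℕ} (e : Fin n → ℕ) (p : List ℕ) : Prop := ¬ Contains e p

/-- The number of zero entries of `e`. -/
def zeroStat {n : ℕ} (e : Fin n → ℕ) : ℕ :=
  (Finset.univ.filter (fun i : Fin n => e i = 0)).card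

/-- The number of distinct positive values among the entries of `e`. -/
def distStat {n : ℕ} (e : Fin n → ℕ) : ℕ :=
  ((Finset.univ.image e).filter (fun v => 0 < v)).card

/-- The number of repeated entries of `e`: `n - dist e`. -/
def repStat {n : ℕ} (e : Fin n → ℕ) : ℕ := n - distStat e

/-- The number of saturated entries of `e` (1-indexed: `e_i = i - 1`). -/
def satuStat {n : ℕ} (e : Fin n → ℕ) : ℕ :=
  (Finset.univ.filter (fun i : Fin n => e i = (i : ℕ))).card

namespace Stmt5


lemma contains3 {n : ℕ} (x y z : ℕ) (e : Fin n → ℕ) :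
    Contains e [x,y,z] ↔ ∃ s : Fin 3 → Fin n, StrictMono s ∧
    ∀ a b : Fin 3,
      ([x,y,z].get a < [x,y,z].get b ↔ e (s a) < e (s b)) ∧
      ([x,y,z].get a = [x,y,z].get b ↔ e (s a) = e (s b)) := Iff.rfl

lemma finMkTwo : (⟨2, by omega⟩ : Fin 3) = 2 := rfl

section
variable {n : ℕ} (e : Fin n → ℕ)

lemma contains_012_iff :
    Contains e [0,1,2] ↔ ∃ i j k : Fin n, i < j ∧ j < k ∧ e i < e j ∧ e j < e k := by
  rw [contains3]
  constructor
  · rintro ⟨s, hs, h⟩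
    exact ⟨s 0, s 1, s 2, hs (by decide), hs (by decide),
      ((h 0 1).1).mp (by simp), ((h 1 2).1).mp (by simp)⟩
  · rintro ⟨i, j, k, hij, hjk, h1, h2⟩
    refine ⟨![i, j, k], ?_, ?_⟩
    · intro a b hab
      fin_cases a <;> fin_cases b <;> simp_all <;>
        first
        | exact absurd hab (by decide)
        | exact hij | exact hjk | exact hij.trans hjk
    · intro a b
      fin_cases a <;> fin_cases b <;>
        simp only [finMkTwo, List.get_eq_getElem, Matrix.cons_val', Matrix.cons_val_zero,
          Matrix.cons_val_one, Matrix.head_cons, Matrix.empty_val', Fin.mk_zero, Fin.mk_one,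
          Matrix.cons_val_fin_one, Matrix.head_fin_const, Fin.isValue, Fin.val_zero,
          Fin.val_one, List.getElem_cons_zero, List.getElem_cons_succ,
          Matrix.cons_val_two, Matrix.tail_cons, Fin.val_two] <;>
        constructor <;> first | trivial | omega

lemma contains_210_iff :
    Contains e [2,1,0] ↔ ∃ i j k : Fin n, i < j ∧ j < k ∧ e k < e j ∧ e j < e i := by
  rw [contains3]
  constructor
  · rintro ⟨s, hs, h⟩
    exact ⟨s 0, s 1, s 2, hs (by decide), hs (by decide),
      ((h 2 1).1).mp (by simp), ((h 1 0).1).mp (by simp)⟩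
  · rintro ⟨i, j, k, hij, hjk, h1, h2⟩
    refine ⟨![i, j, k], ?_, ?_⟩
    · intro a b hab
      fin_cases a <;> fin_cases b <;> simp_all <;>
        first
        | exact absurd hab (by decide)
        | exact hij | exact hjk | exact hij.trans hjk
    · intro a b
      fin_cases a <;> fin_cases b <;>
        simp only [finMkTwo, List.get_eq_getElem, Matrix.cons_val', Matrix.cons_val_zero,
          Matrix.cons_val_one, Matrix.head_cons, Matrix.empty_val', Fin.mk_zero, Fin.mk_one,
          Matrix.cons_val_fin_one, Matrix.head_fin_const, Fin.isValue, Fin.val_zero,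
          Fin.val_one, List.getElem_cons_zero, List.getElem_cons_succ,
          Matrix.cons_val_two, Matrix.tail_cons, Fin.val_two] <;>
        constructor <;> first | trivial | omega

lemma contains_201_iff :
    Contains e [2,0,1] ↔ ∃ i j k : Fin n, i < j ∧ j < k ∧ e j < e k ∧ e k < e i := by
  rw [contains3]
  constructor
  · rintro ⟨s, hs, h⟩
    exact ⟨s 0, s 1, s 2, hs (by decide), hs (by decide),
      ((h 1 2).1).mp (by simp), ((h 2 0).1).mp (by simp)⟩
  · rintro ⟨i, j, k, hij, hjk, h1, h2⟩
    refine ⟨![i, j, k], ?_, ?_⟩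
    · intro a b hab
      fin_cases a <;> fin_cases b <;> simp_all <;>
        first
        | exact absurd hab (by decide)
        | exact hij | exact hjk | exact hij.trans hjk
    · intro a b
      fin_cases a <;> fin_cases b <;>
        simp only [finMkTwo, List.get_eq_getElem, Matrix.cons_val', Matrix.cons_val_zero,
          Matrix.cons_val_one, Matrix.head_cons, Matrix.empty_val', Fin.mk_zero, Fin.mk_one,
          Matrix.cons_val_fin_one, Matrix.head_fin_const, Fin.isValue, Fin.val_zero,
          Fin.val_one, List.getElem_cons_zero, List.getElem_cons_succ,
          Matrix.cons_val_two, Matrix.tail_cons, Fin.val_two] <;>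
        constructor <;> first | trivial | omega

end

lemma geo_sum (k : ℕ) : ∑ i ∈ Finset.range k, 2 ^ i = 2 ^ k - 1 := by
  induction k with
  | zero => simp
  | succ k ih =>
    rw [Finset.sum_range_succ, ih]
    have : (1:ℕ) ≤ 2 ^ k := Nat.one_le_two_pow
    have h2 : (2:ℕ) ^ (k+1) = 2 * 2 ^ k := by ring
    omega

lemma geo_sum_Icc (c m : ℕ) : ∑ t ∈ Finset.Icc (c+1) m, 2 ^ (t - c - 1) = 2 ^ (m - c) - 1 := by
  rcases le_or_gt (c+1) m with h | h
  · induction m with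
    | zero => omega
    | succ m ih =>
      rcases le_or_gt (c+1) m with h' | h'
      · rw [Finset.sum_Icc_succ_top (by omega), ih h']
        have e1 : m + 1 - c = (m - c) + 1 := by omega
        rw [e1]
        simp only [Nat.add_sub_cancel]
        have e2 : (2:ℕ) ^ ((m-c)+1) = 2 * 2^(m-c) := by ring
        have : (1:ℕ) ≤ 2 ^ (m - c) := Nat.one_le_two_pow
        omega
      · have hm : m = c := by omega
        subst hm
        rw [Finset.Icc_self]
        simp
  · rw [Finset.Icc_eq_empty (by omega)]
    have : m - c = 0 := by omega
    simp [this]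

lemma gauss_Icc (m : ℕ) : ∑ a ∈ Finset.Icc 1 m, (a - 1) = m.choose 2 := by
  have h := Finset.sum_range_id_mul_two m
  have hre : ∑ a ∈ Finset.Icc 1 m, (a - 1) = ∑ i ∈ Finset.range m, i := by
    rw [show Finset.Icc 1 m = Finset.Ico 1 (m+1) from rfl]
    rw [Finset.range_eq_Ico, Finset.sum_Ico_eq_sum_range, Finset.sum_Ico_eq_sum_range]
    simp
  rw [hre, Nat.choose_two_right]
  omega

lemma gauss_Icc' (m : ℕ) : ∑ a ∈ Finset.Icc 1 m, a = (m+1).choose 2 := by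
  have h := Finset.sum_range_id_mul_two (m+1)
  have hins : Finset.range (m+1) = insert 0 (Finset.Icc 1 m) := by
    ext x; simp; omega
  rw [hins, Finset.sum_insert (by simp)] at h
  simp only [Nat.add_sub_cancel] at h
  rw [Nat.choose_two_right, Nat.succ_sub_one]
  have key : (m+1) * m = (∑ a ∈ Finset.Icc 1 m, a) * 2 := by omega
  exact (Nat.div_eq_of_eq_mul_left (by norm_num) key).symm

lemma sumA (m : ℕ) : ∑ μ ∈ Finset.Icc 1 m, μ * 2 ^ (m - μ) + (m + 2) = 2 ^ (m+1) := by
  induction m with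
  | zero => simp
  | succ m ih =>
    rw [Finset.sum_Icc_succ_top (by omega)]
    have hc : ∀ μ ∈ Finset.Icc 1 m, μ * 2 ^ (m + 1 - μ) = 2 * (μ * 2 ^ (m - μ)) := by
      intro μ hμ
      simp only [Finset.mem_Icc] at hμ
      rw [show m + 1 - μ = (m - μ) + 1 from by omega]
      ring
    rw [Finset.sum_congr rfl hc, ← Finset.mul_sum]
    have h2 : (2:ℕ) ^ (m+2) = 2 * 2 ^ (m+1) := by ring
    simp only [Nat.sub_self, pow_zero, mul_one]
    omega

lemma pascal2 (m : ℕ) : (m+2).choose 2 = (m+1).choose 2 + (m+1) := by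
  rw [show m+2 = (m+1)+1 from rfl, Nat.choose_succ_succ (m+1) 1, Nat.choose_one_right]
  exact Nat.add_comm _ _

lemma pascal3 (m : ℕ) : (m+2).choose 3 = (m+1).choose 3 + (m+1).choose 2 := by
  rw [show m+2 = (m+1)+1 from rfl, Nat.choose_succ_succ (m+1) 2]
  exact Nat.add_comm _ _

lemma sumT (m : ℕ) :
    ∑ μ ∈ Finset.Icc 1 m, μ.choose 2 * 2 ^ (m - μ) + ((m+2).choose 2 + 1) = 2 ^ (m+1) := by
  induction m with
  | zero => simp
  | succ m ih =>
    rw [Finset.sum_Icc_succ_top (by omega)]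
    have hc : ∀ μ ∈ Finset.Icc 1 m,
        μ.choose 2 * 2 ^ (m + 1 - μ) = 2 * (μ.choose 2 * 2 ^ (m - μ)) := by
      intro μ hμ
      simp only [Finset.mem_Icc] at hμ
      rw [show m + 1 - μ = (m - μ) + 1 from by omega]
      ring
    rw [Finset.sum_congr rfl hc, ← Finset.mul_sum]
    have h2 : (2:ℕ) ^ (m+2) = 2 * 2 ^ (m+1) := by ring
    have p1 : (m+3).choose 2 = (m+2).choose 2 + (m+2) := pascal2 (m+1)
    have p2 : (m+2).choose 2 = (m+1).choose 2 + (m+1) := pascal2 m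
    simp only [Nat.sub_self, pow_zero, mul_one]
    rw [show m+1+2 = m+3 from rfl]
    have hb : (m+1+1).choose 2 = (m+2).choose 2 := rfl
    omega

lemma sumU (m : ℕ) : ∑ μ ∈ Finset.Icc 1 m, μ.choose 2 = (m+1).choose 3 := by
  induction m with
  | zero => simp [Nat.choose]
  | succ m ih =>
    rw [Finset.sum_Icc_succ_top (by omega), ih]
    have := pascal3 m
    rw [show m+1+1 = m+2 from rfl]
    omega

lemma sumS (m : ℕ) :
    ∑ μ ∈ Finset.Icc 1 m, μ.choose 2 * (2 ^ (m - μ) - 1) + ((m+2).choose 3 + (m + 2))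
      = 2 ^ (m+1) := by
  have hsplit : ∀ μ ∈ Finset.Icc 1 m,
      μ.choose 2 * (2 ^ (m - μ) - 1) = μ.choose 2 * 2 ^ (m - μ) - μ.choose 2 := by
    intro μ _
    rw [mul_tsub, mul_one]
  rw [Finset.sum_congr rfl hsplit, Finset.sum_tsub_distrib]
  · have hT := sumT m
    have hU := sumU m
    have hle : ∑ μ ∈ Finset.Icc 1 m, μ.choose 2
        ≤ ∑ μ ∈ Finset.Icc 1 m, μ.choose 2 * 2 ^ (m - μ) := by
      refine Finset.sum_le_sum fun μ _ => ?_
      exact Nat.le_mul_of_pos_right _ (Nat.pow_pos (by norm_num))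
    have p3 := pascal3 m
    have p2 := pascal2 m
    omega
  · intro μ _
    exact Nat.le_mul_of_pos_right _ (Nat.pow_pos (by norm_num))

lemma sumB (m : ℕ) : ∑ q ∈ Finset.Icc 2 (m+1), (2^(q-1) - 1) + (m + 2) = 2 ^ (m+1) := by
  induction m with
  | zero => simp
  | succ m ih =>
    rw [Finset.sum_Icc_succ_top (by omega)]
    have h2 : (2:ℕ) ^ (m+2) = 2 * 2 ^ (m+1) := by ring
    have : (1:ℕ) ≤ 2 ^ (m+1) := Nat.one_le_two_pow
    simp only [Nat.add_sub_cancel]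
    omega



open Finset

def D {n : ℕ} (e : Fin n → ℕ) : Prop := ∀ i j : Fin n, i < j → e i ≠ 0 → e j ≤ e i
def NoDec {n : ℕ} (e : Fin n → ℕ) : Prop :=
  ∀ i j k : Fin n, i < j → j < k → e j < e i → e j ≤ e k

def map0 (n : ℕ) : Fin n → ℕ := fun _ => 0
def map1 (n μ a : ℕ) (Y : Finset ℕ) : Fin n → ℕ :=
  fun i => if (i:ℕ) = μ ∨ (i:ℕ) ∈ Y then a else 0
def map2 (n μ a b t : ℕ) (Y : Finset ℕ) : Fin n → ℕ :=
  fun i => if t ≤ (i:ℕ) then b else if (i:ℕ) = μ ∨ (i:ℕ) ∈ Y then a else 0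

def P1 (n : ℕ) : Finset ((_ : ℕ) × ℕ × Finset ℕ) :=
  (Icc 1 (n-1)).sigma fun μ => (Icc 1 μ) ×ˢ (Icc (μ+1) (n-1)).powerset
def F1 (n : ℕ) : Finset (Fin n → ℕ) := (P1 n).image fun x => map1 n x.1 x.2.1 x.2.2

def P2 (n : ℕ) : Finset ((_ : ℕ) × ((_ : ℕ) × ℕ) × (_ : ℕ) × Finset ℕ) :=
  (Icc 1 (n-1)).sigma fun μ =>
    ((Icc 1 μ).sigma fun a => Icc 1 (a-1)) ×ˢ
      ((Icc (μ+1) (n-1)).sigma fun t => (Icc (μ+1) (t-1)).powerset)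
def F2 (n : ℕ) : Finset (Fin n → ℕ) :=
  (P2 n).image fun x => map2 n x.1 x.2.1.1 x.2.1.2 x.2.2.1 x.2.2.2

def F210 (n : ℕ) : Finset (Fin n → ℕ) := insert (map0 n) (F1 n ∪ F2 n)

lemma mem_P1 {n μ a : ℕ} {Y : Finset ℕ} :
    (⟨μ, a, Y⟩ : (_ : ℕ) × ℕ × Finset ℕ) ∈ P1 n ↔ (1 ≤ μ ∧ μ ≤ n-1) ∧ (1 ≤ a ∧ a ≤ μ) ∧
      (∀ w ∈ Y, μ + 1 ≤ w ∧ w ≤ n - 1) := by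
  simp [P1, Finset.mem_sigma, Finset.mem_product, Finset.mem_powerset, Finset.subset_iff,
    Finset.mem_Icc]
  try tauto

lemma mem_P2 {n μ a b t : ℕ} {Y : Finset ℕ} :
    (⟨μ, ⟨a, b⟩, t, Y⟩ : (_ : ℕ) × ((_ : ℕ) × ℕ) × (_ : ℕ) × Finset ℕ) ∈ P2 n ↔
      (1 ≤ μ ∧ μ ≤ n-1) ∧ (1 ≤ a ∧ a ≤ μ) ∧
      (1 ≤ b ∧ b ≤ a - 1) ∧
      (μ + 1 ≤ t ∧ t ≤ n - 1) ∧
      (∀ w ∈ Y, μ + 1 ≤ w ∧ w ≤ t - 1) := by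
  simp [P2, Finset.mem_sigma, Finset.mem_product, Finset.mem_powerset, Finset.subset_iff,
    Finset.mem_Icc]
  try tauto

/-- key value lemma for map1 -/
lemma map1_key {n μ a : ℕ} {Y : Finset ℕ} (hx : (⟨μ, a, Y⟩ : (_ : ℕ) × ℕ × Finset ℕ) ∈ P1 n)
    (i : Fin n) :
    (μ ≤ (i:ℕ) ∧ a ≤ (i:ℕ) ∧ map1 n μ a Y i = a) ∨ map1 n μ a Y i = 0 := by
  rw [mem_P1] at hx
  obtain ⟨hμ, ha, hY⟩ := hx
  unfold map1
  by_cases h : (i:ℕ) = μ ∨ (i:ℕ) ∈ Y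
  · rw [if_pos h]
    left
    rcases h with h | h
    · omega
    · have := hY _ h
      omega
  · rw [if_neg h]
    right; rfl

lemma map2_key {n μ a b t : ℕ} {Y : Finset ℕ}
    (hx : (⟨μ, ⟨a, b⟩, t, Y⟩ : (_ : ℕ) × ((_ : ℕ) × ℕ) × (_ : ℕ) × Finset ℕ) ∈ P2 n)
    (i : Fin n) :
    (t ≤ (i:ℕ) ∧ map2 n μ a b t Y i = b) ∨
    ((i:ℕ) < t ∧ μ ≤ (i:ℕ) ∧ a ≤ (i:ℕ) ∧ map2 n μ a b t Y i = a) ∨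
    ((i:ℕ) < t ∧ map2 n μ a b t Y i = 0) := by
  rw [mem_P2] at hx
  obtain ⟨hμ, ha, hb, ht, hY⟩ := hx
  unfold map2
  by_cases h1 : t ≤ (i:ℕ)
  · rw [if_pos h1]; left; exact ⟨h1, rfl⟩
  · rw [if_neg h1]
    by_cases h : (i:ℕ) = μ ∨ (i:ℕ) ∈ Y
    · rw [if_pos h]
      right; left
      rcases h with h | h
      · omega
      · have := hY _ h
        omega
    · rw [if_neg h]
      right; right
      exact ⟨by omega, rfl⟩

lemma of_mem_F210 {n : ℕ} {e : Fin n → ℕ} (he : e ∈ F210 n) :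
    InvSeq e ∧ D e ∧ NoDec e := by
  rw [F210, Finset.mem_insert, Finset.mem_union] at he
  rcases he with rfl | he | he
  · refine ⟨fun i => by simp [map0], fun i j _ h => by simp [map0] at h,
      fun i j k _ _ h => by simp [map0] at h⟩
  · rw [F1, Finset.mem_image] at he
    obtain ⟨⟨μ, a, Y⟩, hx, rfl⟩ := he
    dsimp only
    have key := map1_key hx
    have hax : 1 ≤ a := (mem_P1.mp hx).2.1.1
    refine ⟨fun i => ?_, fun i j hij h0 => ?_, fun i j k hij hjk h1 => ?_⟩
    · rcases key i with ⟨_, _, h⟩ | h <;> omega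
    · rcases key i with ⟨_, _, h⟩ | h <;> rcases key j with ⟨_, _, h'⟩ | h' <;> omega
    · rcases key i with ⟨_, _, h⟩ | h <;> rcases key j with ⟨_, _, h'⟩ | h' <;>
        rcases key k with ⟨_, _, h''⟩ | h'' <;> omega
  · rw [F2, Finset.mem_image] at he
    obtain ⟨⟨μ, ⟨a, b⟩, t, Y⟩, hx, rfl⟩ := he
    dsimp only
    have key := map2_key hx
    obtain ⟨hμ, ha, hb, ht, hY⟩ := mem_P2.mp hx
    refine ⟨fun i => ?_, fun i j hij h0 => ?_, fun i j k hij hjk h1 => ?_⟩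
    · rcases key i with ⟨_, h⟩ | ⟨_, _, _, h⟩ | ⟨_, h⟩ <;> omega
    · rcases key i with ⟨_, h⟩ | ⟨_, _, _, h⟩ | ⟨_, h⟩ <;>
        rcases key j with ⟨_, h'⟩ | ⟨_, _, _, h'⟩ | ⟨_, h'⟩ <;>
        first
        | omega
        | (exfalso; revert hij; simp only [Fin.lt_def]; omega)
    · rcases key i with ⟨_, h⟩ | ⟨_, _, _, h⟩ | ⟨_, h⟩ <;>
        rcases key j with ⟨_, h'⟩ | ⟨_, _, _, h'⟩ | ⟨_, h'⟩ <;>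
        rcases key k with ⟨_, h''⟩ | ⟨_, _, _, h''⟩ | ⟨_, h''⟩ <;>
        first
        | omega
        | (exfalso; revert hij hjk; simp only [Fin.lt_def]; omega)




open Finset

lemma mem_F210 {n : ℕ} (hn : 0 < n) {e : Fin n → ℕ}
    (he : InvSeq e) (hD : D e) (hN : NoDec e) : e ∈ F210 n := by
  by_cases hz : ∀ i, e i = 0
  · have : e = map0 n := funext fun i => hz i
    rw [this, F210]
    exact Finset.mem_insert_self _ _
  push_neg at hz
  obtain ⟨i0, hi0⟩ := hz
  have hPne : (univ.filter fun i : Fin n => e i ≠ 0).Nonempty :=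
    ⟨i0, by simp [hi0]⟩
  set m := (univ.filter fun i : Fin n => e i ≠ 0).min' hPne with hm
  have hm_mem : e m ≠ 0 := by
    have := Finset.min'_mem _ hPne
    simpa using this
  have hm_min : ∀ i : Fin n, e i ≠ 0 → m ≤ i := fun i hi =>
    Finset.min'_le _ i (by simpa using hi)
  have hm_lt : ∀ i : Fin n, i < m → e i = 0 := by
    intro i hi
    by_contra h
    have := hm_min i h
    omega
  set a := e m with ha
  have ham : a ≤ (m:ℕ) := he m
  have ha1 : 1 ≤ a := by omega
  by_cases h2 : ∀ i, e i = 0 ∨ e i = a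
  · refine Finset.mem_insert_of_mem (Finset.mem_union_left _ ?_)
    rw [F1, Finset.mem_image]
    refine ⟨⟨(m:ℕ), a, (univ.filter fun i : Fin n => m < i ∧ e i ≠ 0).image Fin.val⟩, ?_, ?_⟩
    · rw [mem_P1]
      refine ⟨⟨by omega, by omega⟩, ⟨ha1, ham⟩, ?_⟩
      intro w hw
      simp only [Finset.mem_image, Finset.mem_filter, Finset.mem_univ, true_and] at hw
      obtain ⟨i, ⟨hmi, _⟩, rfl⟩ := hw
      have := i.isLt
      rw [Fin.lt_def] at hmi
      omega
    · dsimp only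
      funext i
      unfold map1
      by_cases hei : e i = 0
      · rw [if_neg, hei]
        rintro (h | h)
        · exact hm_mem (by rwa [show i = m from Fin.ext h] at hei)
        · simp only [Finset.mem_image, Finset.mem_filter, Finset.mem_univ, true_and] at h
          obtain ⟨i', ⟨_, hne⟩, hval⟩ := h
          exact hne (by rw [show i' = i from Fin.ext hval]; exact hei)
      · have heia : e i = a := (h2 i).resolve_left hei
        rw [if_pos, heia]
        by_cases him : i = m
        · exact Or.inl (by rw [him])
        · refine Or.inr ?_
          simp only [Finset.mem_image, Finset.mem_filter, Finset.mem_univ, true_and]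
          exact ⟨i, ⟨lt_of_le_of_ne (hm_min i hei) (Ne.symm him), hei⟩, rfl⟩
  · push_neg at h2
    obtain ⟨j0, hj01, hj02⟩ := h2
    have hQne : (univ.filter fun i : Fin n => e i ≠ 0 ∧ e i ≠ a).Nonempty :=
      ⟨j0, by simp [hj01, hj02]⟩
    set t := (univ.filter fun i : Fin n => e i ≠ 0 ∧ e i ≠ a).min' hQne with htdef
    have ht_mem : e t ≠ 0 ∧ e t ≠ a := by
      have := Finset.min'_mem _ hQne
      simpa using this
    have ht_min : ∀ i : Fin n, e i ≠ 0 → e i ≠ a → t ≤ i := fun i h1 h1' =>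
      Finset.min'_le _ i (by simp [h1, h1'])
    set b := e t with hb
    have hmt : m < t := lt_of_le_of_ne (hm_min t ht_mem.1) (by
      intro h
      exact ht_mem.2 (show e t = a by rw [← h, ← ha]))
    have hba : b < a := lt_of_le_of_ne (hD m t hmt hm_mem) ht_mem.2
    have hb1 : 1 ≤ b := by
      have := ht_mem.1
      omega
    have htail : ∀ k : Fin n, t ≤ k → e k = b := by
      intro k hk
      rcases eq_or_lt_of_le hk with h | h
      · exact h ▸ hb.symm
      · have h1 : b ≤ e k := hN m t k hmt h (by omega)
        have h2 : e k ≤ b := hD t k h ht_mem.1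
        omega
    have hmid : ∀ i : Fin n, i < t → e i = 0 ∨ e i = a := by
      intro i hi
      by_contra h
      push_neg at h
      have := ht_min i h.1 h.2
      omega
    refine Finset.mem_insert_of_mem (Finset.mem_union_right _ ?_)
    rw [F2, Finset.mem_image]
    refine ⟨⟨(m:ℕ), ⟨a, b⟩, (t:ℕ),
      (univ.filter fun i : Fin n => m < i ∧ i < t ∧ e i = a).image Fin.val⟩, ?_, ?_⟩
    · rw [mem_P2]
      have htn := t.isLt
      rw [Fin.lt_def] at hmt
      refine ⟨⟨by omega, by omega⟩, ⟨ha1, ham⟩, ⟨hb1, by omega⟩, ⟨by omega, by omega⟩, ?_⟩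
      intro w hw
      simp only [Finset.mem_image, Finset.mem_filter, Finset.mem_univ, true_and] at hw
      obtain ⟨i, ⟨h1, h1', _⟩, rfl⟩ := hw
      rw [Fin.lt_def] at h1 h1'
      omega
    · dsimp only
      funext i
      unfold map2
      by_cases hti : (t:ℕ) ≤ (i:ℕ)
      · rw [if_pos hti]
        exact (htail i (by rwa [Fin.le_def])).symm
      · rw [if_neg hti]
        have hit : i < t := by rw [Fin.lt_def]; omega
        rcases hmid i hit with hei | hei
        · rw [if_neg, hei]
          rintro (h | h)
          · exact hm_mem (by rwa [show i = m from Fin.ext h] at hei)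
          · simp only [Finset.mem_image, Finset.mem_filter, Finset.mem_univ, true_and] at h
            obtain ⟨i', ⟨_, _, hia⟩, hval⟩ := h
            rw [show i' = i from Fin.ext hval] at hia
            omega
        · rw [if_pos, hei]
          by_cases him : i = m
          · exact Or.inl (by rw [him])
          · refine Or.inr ?_
            simp only [Finset.mem_image, Finset.mem_filter, Finset.mem_univ, true_and]
            refine ⟨i, ⟨lt_of_le_of_ne (hm_min i (by omega)) (Ne.symm him), hit, hei⟩, rfl⟩




open Finset

lemma eval1 {n μ a : ℕ} {Y : Finset ℕ} {w : ℕ} (hw : w < n) :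
    map1 n μ a Y ⟨w, hw⟩ = if w = μ ∨ w ∈ Y then a else 0 := rfl

lemma eval2 {n μ a b t : ℕ} {Y : Finset ℕ} {w : ℕ} (hw : w < n) :
    map2 n μ a b t Y ⟨w, hw⟩ = if t ≤ w then b else if w = μ ∨ w ∈ Y then a else 0 := rfl

lemma map1_inj {n : ℕ} : Set.InjOn (fun x : (_ : ℕ) × ℕ × Finset ℕ =>
    map1 n x.1 x.2.1 x.2.2) (P1 n) := by
  rintro ⟨μ, a, Y⟩ hx ⟨μ', a', Y'⟩ hy h
  obtain ⟨hμ, ha, hY⟩ := mem_P1.mp hx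
  obtain ⟨hμ', ha', hY'⟩ := mem_P1.mp hy
  dsimp only at h
  have key : ∀ w : ℕ, w ≤ n - 1 → ((w = μ ∨ w ∈ Y) ↔ (w = μ' ∨ w ∈ Y')) := by
    intro w hw
    have hwn : w < n := by omega
    have := congrFun h ⟨w, hwn⟩
    rw [eval1 hwn, eval1 hwn] at this
    constructor
    · intro hc
      rw [if_pos hc] at this
      by_contra hc'
      rw [if_neg hc'] at this
      omega
    · intro hc
      rw [if_pos hc] at this
      by_contra hc'
      rw [if_neg hc'] at this
      omega
  have hμeq : μ = μ' := by
    have h1 := (key μ (by omega)).mp (Or.inl rfl)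
    have h2 := (key μ' (by omega)).mpr (Or.inl rfl)
    rcases h1 with h1 | h1
    · exact h1
    · rcases h2 with h2 | h2
      · exact h2.symm
      · have := hY _ h2
        have := hY' _ h1
        omega
  subst hμeq
  have haeq : a = a' := by
    have hwn : μ < n := by omega
    have := congrFun h ⟨μ, hwn⟩
    rw [eval1 hwn, eval1 hwn, if_pos (Or.inl rfl), if_pos (Or.inl rfl)] at this
    exact this
  subst haeq
  have hYeq : Y = Y' := by
    ext w
    constructor
    · intro hw
      have hb := hY _ hw
      rcases (key w (by omega)).mp (Or.inr hw) with h1 | h1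
      · omega
      · exact h1
    · intro hw
      have hb := hY' _ hw
      rcases (key w (by omega)).mpr (Or.inr hw) with h1 | h1
      · omega
      · exact h1
  rw [hYeq]

lemma map2_inj_aux {n μ a b t μ' a' b' t' : ℕ} {Y Y' : Finset ℕ}
    (hx : (⟨μ, ⟨a, b⟩, t, Y⟩ : (_ : ℕ) × ((_ : ℕ) × ℕ) × (_ : ℕ) × Finset ℕ) ∈ P2 n)
    (hy : (⟨μ', ⟨a', b'⟩, t', Y'⟩ : (_ : ℕ) × ((_ : ℕ) × ℕ) × (_ : ℕ) × Finset ℕ) ∈ P2 n)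
    (h : map2 n μ a b t Y = map2 n μ' a' b' t' Y') : ¬ t < t' := by
  intro hlt
  obtain ⟨hμ, ha, hb, ht, hY⟩ := mem_P2.mp hx
  obtain ⟨hμ', ha', hb', ht', hY'⟩ := mem_P2.mp hy
  -- evaluate at t' : values b on left, b' on right
  have h1 := congrFun h ⟨t', by omega⟩
  rw [eval2, eval2, if_pos (by omega : t ≤ t'), if_pos (le_refl t')] at h1
  -- evaluate at t : value b on left
  have h2 := congrFun h ⟨t, by omega⟩
  rw [eval2, eval2, if_pos (le_refl t), if_neg (by omega : ¬ t' ≤ t)] at h2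
  by_cases hc : t = μ' ∨ t ∈ Y'
  · rw [if_pos hc] at h2
    omega
  · rw [if_neg hc] at h2
    omega

lemma map2_inj {n : ℕ} : Set.InjOn (fun x : (_ : ℕ) × ((_ : ℕ) × ℕ) × (_ : ℕ) × Finset ℕ =>
    map2 n x.1 x.2.1.1 x.2.1.2 x.2.2.1 x.2.2.2) (P2 n) := by
  rintro ⟨μ, ⟨a, b⟩, t, Y⟩ hx ⟨μ', ⟨a', b'⟩, t', Y'⟩ hy h
  dsimp only at h
  have hteq : t = t' := by
    have h1 := map2_inj_aux hx hy h
    have h2 := map2_inj_aux hy hx h.symm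
    omega
  subst hteq
  obtain ⟨hμ, ha, hb, ht, hY⟩ := mem_P2.mp hx
  obtain ⟨hμ', ha', hb', ht', hY'⟩ := mem_P2.mp hy
  have hbeq : b = b' := by
    have h1 := congrFun h ⟨t, by omega⟩
    rw [eval2, eval2, if_pos (le_refl t), if_pos (le_refl t)] at h1
    exact h1
  subst hbeq
  have key : ∀ w : ℕ, w < t → ((w = μ ∨ w ∈ Y) ↔ (w = μ' ∨ w ∈ Y')) := by
    intro w hw
    have hwn : w < n := by omega
    have := congrFun h ⟨w, hwn⟩
    rw [eval2 hwn, eval2 hwn, if_neg (by omega : ¬ t ≤ w), if_neg (by omega : ¬ t ≤ w)] at this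
    constructor
    · intro hc
      rw [if_pos hc] at this
      by_contra hc'
      rw [if_neg hc'] at this
      omega
    · intro hc
      rw [if_pos hc] at this
      by_contra hc'
      rw [if_neg hc'] at this
      omega
  have hμeq : μ = μ' := by
    have h1 := (key μ (by omega)).mp (Or.inl rfl)
    have h2 := (key μ' (by omega)).mpr (Or.inl rfl)
    rcases h1 with h1 | h1
    · exact h1
    · rcases h2 with h2 | h2
      · exact h2.symm
      · have := hY _ h2
        have := hY' _ h1
        omega
  subst hμeq
  have haeq : a = a' := by
    have hwn : μ < n := by omega
    have := congrFun h ⟨μ, hwn⟩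
    rw [eval2 hwn, eval2 hwn, if_neg (by omega : ¬ t ≤ μ), if_neg (by omega : ¬ t ≤ μ),
      if_pos (Or.inl rfl), if_pos (Or.inl rfl)] at this
    exact this
  subst haeq
  have hYeq : Y = Y' := by
    ext w
    constructor
    · intro hw
      have hbd := hY _ hw
      rcases (key w (by omega)).mp (Or.inr hw) with h1 | h1
      · omega
      · exact h1
    · intro hw
      have hbd := hY' _ hw
      rcases (key w (by omega)).mpr (Or.inr hw) with h1 | h1
      · omega
      · exact h1
  rw [hYeq]

lemma map0_not_mem_F1 {n : ℕ} : map0 n ∉ F1 n := by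
  rw [F1, Finset.mem_image]
  rintro ⟨⟨μ, a, Y⟩, hx, h⟩
  obtain ⟨hμ, ha, hY⟩ := mem_P1.mp hx
  have hwn : μ < n := by omega
  have := congrFun h ⟨μ, hwn⟩
  rw [eval1 hwn, if_pos (Or.inl rfl)] at this
  simp [map0] at this
  omega

lemma map0_not_mem_F2 {n : ℕ} : map0 n ∉ F2 n := by
  rw [F2, Finset.mem_image]
  rintro ⟨⟨μ, ⟨a, b⟩, t, Y⟩, hx, h⟩
  obtain ⟨hμ, ha, hb, ht, hY⟩ := mem_P2.mp hx
  have hwn : t < n := by omega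
  have := congrFun h ⟨t, hwn⟩
  rw [eval2 hwn, if_pos (le_refl t)] at this
  simp [map0] at this
  omega

lemma F1_disj_F2 {n : ℕ} : Disjoint (F1 n) (F2 n) := by
  rw [Finset.disjoint_left]
  rintro e he1 he2
  rw [F1, Finset.mem_image] at he1
  rw [F2, Finset.mem_image] at he2
  obtain ⟨⟨μ, a, Y⟩, hx, rfl⟩ := he1
  obtain ⟨⟨μ', ⟨a', b'⟩, t', Y'⟩, hy, h⟩ := he2
  obtain ⟨hμ, ha, hY⟩ := mem_P1.mp hx
  obtain ⟨hμ', ha', hb', ht', hY'⟩ := mem_P2.mp hy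
  dsimp only at h
  -- map2 has value a' at μ' and b' at t', with b' < a'; map1 has all values in {0, a}
  have h1 := congrFun h ⟨μ', by omega⟩
  have h2 := congrFun h ⟨t', by omega⟩
  rw [eval2, if_neg (by omega : ¬ t' ≤ μ'), if_pos (Or.inl rfl)] at h1
  rw [eval2, if_pos (le_refl t')] at h2
  rw [eval1] at h1 h2
  split_ifs at h1 h2 <;> omega

lemma card_F210 {n : ℕ} (hn : 1 ≤ n) :
    (F210 n).card = 2 ^ (n+1) - (n+1).choose 3 - 2 * n - 1 := by
  rw [F210, Finset.card_insert_of_notMem (by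
    rw [Finset.mem_union]
    rintro (h | h)
    · exact map0_not_mem_F1 h
    · exact map0_not_mem_F2 h),
    Finset.card_union_of_disjoint F1_disj_F2]
  rw [F1, F2, Finset.card_image_of_injOn map1_inj, Finset.card_image_of_injOn map2_inj]
  have hc1 : (P1 n).card = ∑ μ ∈ Icc 1 (n-1), μ * 2 ^ (n-1-μ) := by
    rw [P1, Finset.card_sigma]
    refine Finset.sum_congr rfl fun μ hμ => ?_
    simp only [Finset.mem_Icc] at hμ
    rw [Finset.card_product, Finset.card_powerset, Nat.card_Icc, Nat.card_Icc]
    rw [show μ + 1 - 1 = μ from by omega, show n - 1 + 1 - (μ+1) = n - 1 - μ from by omega]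
  have hc2 : (P2 n).card = ∑ μ ∈ Icc 1 (n-1), μ.choose 2 * (2 ^ (n-1-μ) - 1) := by
    rw [P2, Finset.card_sigma]
    refine Finset.sum_congr rfl fun μ hμ => ?_
    simp only [Finset.mem_Icc] at hμ
    rw [Finset.card_product, Finset.card_sigma, Finset.card_sigma]
    have e1 : ∑ a ∈ Icc 1 μ, (Icc 1 (a-1)).card = μ.choose 2 := by
      rw [← gauss_Icc μ]
      refine Finset.sum_congr rfl fun a ha => ?_
      rw [Nat.card_Icc]
      omega
    have e2 : ∑ t ∈ Icc (μ+1) (n-1), ((Icc (μ+1) (t-1)).powerset).card = 2 ^ (n-1-μ) - 1 := by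
      have := geo_sum_Icc μ (n-1)
      rw [← this]
      refine Finset.sum_congr rfl fun t htm => ?_
      simp only [Finset.mem_Icc] at htm
      rw [Finset.card_powerset, Nat.card_Icc]
      rw [show t - 1 + 1 - (μ+1) = t - μ - 1 from by omega]
    rw [e1, e2]
  rw [hc1, hc2]
  have hA := sumA (n-1)
  have hS := sumS (n-1)
  rw [show n-1+1 = n from by omega, show n-1+2 = n+1 from by omega] at hA hS
  have hpow : 2 ^ (n+1) = 2 * 2 ^ n := by ring
  omega



end Stmt5

namespace Stmt5
open Finset

def No201 {n : ℕ} (e : Fin n → ℕ) : Prop :=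
  ∀ i j k : Fin n, i < j → j < k → e j < e k → e i ≤ e k

lemma avoids_012 {n : ℕ} (hn : 0 < n) {e : Fin n → ℕ} (he : InvSeq e) :
    Avoids e [0,1,2] ↔ D e := by
  rw [Avoids, contains_012_iff]
  constructor
  · intro h i j hij hi
    by_contra hc
    push_neg at hc
    have h0 : e ⟨0, hn⟩ = 0 := Nat.le_zero.mp (he ⟨0, hn⟩)
    have h0i : (⟨0, hn⟩ : Fin n) < i := by
      rw [Fin.lt_def]
      rcases Nat.eq_zero_or_pos (i : ℕ) with h' | h'
      · exfalso
        apply hi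
        have : i = ⟨0, hn⟩ := Fin.ext h'
        rw [this, h0]
      · exact h'
    exact h ⟨⟨0, hn⟩, i, j, h0i, hij, by omega, by omega⟩
  · rintro hD ⟨i, j, k, hij, hjk, h1, h2⟩
    have := hD j k hjk (by omega)
    omega

lemma avoids_210 {n : ℕ} (e : Fin n → ℕ) : Avoids e [2,1,0] ↔ NoDec e := by
  rw [Avoids, contains_210_iff]
  constructor
  · intro h i j k hij hjk h1
    by_contra hc
    exact h ⟨i, j, k, hij, hjk, by omega, h1⟩
  · rintro hN ⟨i, j, k, hij, hjk, h1, h2⟩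
    have := hN i j k hij hjk h2
    omega

lemma avoids_201 {n : ℕ} (e : Fin n → ℕ) : Avoids e [2,0,1] ↔ No201 e := by
  rw [Avoids, contains_201_iff]
  constructor
  · intro h i j k hij hjk h1
    by_contra hc
    exact h ⟨i, j, k, hij, hjk, h1, by omega⟩
  · rintro hN ⟨i, j, k, hij, hjk, h1, h2⟩
    have := hN i j k hij hjk h1
    omega

theorem count210 {n : ℕ} (hn : 1 ≤ n) :
    Nat.card {e : Fin n → ℕ // InvSeq e ∧ Avoids e [0,1,2] ∧ Avoids e [2,1,0]}
      = 2 ^ (n + 1) - (n+1).choose 3 - 2 * n - 1 := by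
  have hiff : ∀ e : Fin n → ℕ,
      (InvSeq e ∧ Avoids e [0,1,2] ∧ Avoids e [2,1,0]) ↔ e ∈ F210 n := by
    intro e
    constructor
    · rintro ⟨hI, h1, h2⟩
      exact mem_F210 hn hI ((avoids_012 hn hI).mp h1) ((avoids_210 e).mp h2)
    · intro h
      obtain ⟨hI, hD, hN⟩ := of_mem_F210 h
      exact ⟨hI, (avoids_012 hn hI).mpr hD, (avoids_210 e).mpr hN⟩
  rw [Nat.card_congr (Equiv.subtypeEquivRight hiff), Nat.card_eq_fintype_card,
    Fintype.card_coe]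
  exact card_F210 hn

end Stmt5

namespace Stmt5
open Finset

-- sorted list helpers
lemma sort_getD_mem {A : Finset ℕ} {k : ℕ} (hk : k < A.card) :
    (A.sort (· ≤ ·)).getD k 0 ∈ A := by
  have hlen : k < (A.sort (· ≤ ·)).length := by rwa [Finset.length_sort]
  rw [List.getD_eq_getElem _ _ hlen]
  rw [← Finset.mem_sort (· ≤ ·)]
  exact List.getElem_mem hlen

lemma sort_gap {A : Finset ℕ} {u v : ℕ} (huv : u ≤ v) (hv : v < A.card) :
    (A.sort (· ≤ ·)).getD u 0 + (v - u) ≤ (A.sort (· ≤ ·)).getD v 0 := by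
  induction v with
  | zero =>
    have : u = 0 := by omega
    subst this
    simp
  | succ v ih =>
    have hstep : (A.sort (· ≤ ·)).getD v 0 < (A.sort (· ≤ ·)).getD (v+1) 0 := by
      have h1 : v < (A.sort (· ≤ ·)).length := by rw [Finset.length_sort]; omega
      have h2 : v + 1 < (A.sort (· ≤ ·)).length := by rw [Finset.length_sort]; omega
      rw [List.getD_eq_get _ _ ⟨v, h1⟩, List.getD_eq_get _ _ ⟨v + 1, h2⟩]
      exact (Finset.sortedLT_sort A).strictMono_get (by simp [Fin.lt_def])
    rcases Nat.eq_or_lt_of_le huv with h | h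
    · subst h; simp
    · have := ih (by omega) (by omega)
      omega

lemma sort_bounds {A : Finset ℕ} {q k : ℕ} (hA : ∀ w ∈ A, 1 ≤ w ∧ w ≤ q - 1)
    (hk : k < A.card) :
    k + 1 ≤ (A.sort (· ≤ ·)).getD k 0 ∧
      (A.sort (· ≤ ·)).getD k 0 + (A.card - 1 - k) ≤ q - 1 := by
  have h0 : (A.sort (· ≤ ·)).getD 0 0 ∈ A := sort_getD_mem (by omega)
  have hlast : (A.sort (· ≤ ·)).getD (A.card - 1) 0 ∈ A := sort_getD_mem (by omega)
  have g1 := sort_gap (Nat.zero_le k) hk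
  have g2 := sort_gap (show k ≤ A.card - 1 by omega) (show A.card - 1 < A.card by omega)
  have b1 := hA _ h0
  have b2 := hA _ hlast
  omega


def mapG1 (n q : ℕ) (A : Finset ℕ) : Fin n → ℕ :=
  fun i => if q - A.card ≤ (i:ℕ) ∧ (i:ℕ) < q then
      (A.sort (· ≤ ·)).getD (q - 1 - (i:ℕ)) 0 - (q - 1 - (i:ℕ)) else 0

def mapG2 (n d s c : ℕ) (W : Finset ℕ) : Fin n → ℕ :=
  fun i => if (s ≤ (i:ℕ) ∧ (i:ℕ) < d) ∨ (i:ℕ) ∈ W then c else 0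

def PG1 (n : ℕ) : Finset ((_ : ℕ) × Finset ℕ) :=
  (Icc 2 n).sigma fun q => (Icc 1 (q-1)).powerset.filter Finset.Nonempty

def PG2 (n : ℕ) : Finset ((_ : ℕ) × ((_ : ℕ) × ℕ) × Finset ℕ) :=
  (Icc 1 (n-1)).sigma fun d => ((Icc 1 (d-1)).sigma fun s => Icc 1 s) ×ˢ
    ((Icc (d+1) (n-1)).powerset.filter Finset.Nonempty)

def G201 (n : ℕ) : Finset (Fin n → ℕ) :=
  insert (map0 n) ((PG1 n).image (fun x => mapG1 n x.1 x.2) ∪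
    (PG2 n).image (fun x => mapG2 n x.1 x.2.1.1 x.2.1.2 x.2.2))

lemma mem_PG1 {n q : ℕ} {A : Finset ℕ} :
    (⟨q, A⟩ : (_ : ℕ) × Finset ℕ) ∈ PG1 n ↔
      (2 ≤ q ∧ q ≤ n) ∧ (∀ w ∈ A, 1 ≤ w ∧ w ≤ q - 1) ∧ A.Nonempty := by
  simp [PG1, Finset.mem_sigma, Finset.mem_powerset, Finset.subset_iff, Finset.mem_Icc]
  try tauto

lemma mem_PG2 {n d s c : ℕ} {W : Finset ℕ} :
    (⟨d, ⟨s, c⟩, W⟩ : (_ : ℕ) × ((_ : ℕ) × ℕ) × Finset ℕ) ∈ PG2 n ↔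
      (1 ≤ d ∧ d ≤ n - 1) ∧ (1 ≤ s ∧ s ≤ d - 1) ∧ (1 ≤ c ∧ c ≤ s) ∧
      (∀ w ∈ W, d + 1 ≤ w ∧ w ≤ n - 1) ∧ W.Nonempty := by
  simp [PG2, Finset.mem_sigma, Finset.mem_product, Finset.mem_powerset, Finset.subset_iff,
    Finset.mem_Icc]
  try tauto

lemma evalG1 {n q : ℕ} {A : Finset ℕ} {w : ℕ} (hw : w < n) :
    mapG1 n q A ⟨w, hw⟩ = if q - A.card ≤ w ∧ w < q then
      (A.sort (· ≤ ·)).getD (q - 1 - w) 0 - (q - 1 - w) else 0 := rfl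

lemma evalG2 {n d s c : ℕ} {W : Finset ℕ} {w : ℕ} (hw : w < n) :
    mapG2 n d s c W ⟨w, hw⟩ = if (s ≤ w ∧ w < d) ∨ w ∈ W then c else 0 := rfl

section G1facts
variable {n q : ℕ} {A : Finset ℕ}

lemma PG1_basic (hx : (⟨q, A⟩ : (_ : ℕ) × Finset ℕ) ∈ PG1 n) :
    1 ≤ A.card ∧ A.card ≤ q - 1 := by
  obtain ⟨hq, hA, hne⟩ := mem_PG1.mp hx
  constructor
  · exact Finset.card_pos.mpr hne
  · calc A.card ≤ (Icc 1 (q-1)).card := Finset.card_le_card (fun w hw => by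
        simp only [Finset.mem_Icc]; exact hA w hw)
    _ = q - 1 := by rw [Nat.card_Icc]; omega

lemma mapG1_key (hx : (⟨q, A⟩ : (_ : ℕ) × Finset ℕ) ∈ PG1 n) (i : Fin n) :
    (q - A.card ≤ (i:ℕ) ∧ (i:ℕ) < q ∧ 1 ≤ mapG1 n q A i ∧ mapG1 n q A i ≤ q - A.card ∧
      mapG1 n q A i + (q - 1 - (i:ℕ)) = (A.sort (· ≤ ·)).getD (q - 1 - (i:ℕ)) 0) ∨
    (¬(q - A.card ≤ (i:ℕ) ∧ (i:ℕ) < q) ∧ mapG1 n q A i = 0) := by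
  obtain ⟨hq, hA, hne⟩ := mem_PG1.mp hx
  have hr := PG1_basic hx
  unfold mapG1
  by_cases h : q - A.card ≤ (i:ℕ) ∧ (i:ℕ) < q
  · rw [if_pos h]
    left
    have hk : q - 1 - (i:ℕ) < A.card := by omega
    have hb := sort_bounds hA hk
    refine ⟨h.1, h.2, by omega, by omega, by omega⟩
  · rw [if_neg h]
    right
    exact ⟨h, rfl⟩

lemma mapG1_dec (hx : (⟨q, A⟩ : (_ : ℕ) × Finset ℕ) ∈ PG1 n) (i j : Fin n)
    (h1 : q - A.card ≤ (i:ℕ)) (h2 : (i:ℕ) ≤ (j:ℕ)) (h3 : (j:ℕ) < q) :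
    mapG1 n q A j ≤ mapG1 n q A i := by
  have hr := PG1_basic hx
  have ki := mapG1_key hx i
  have kj := mapG1_key hx j
  rcases ki with ⟨_, _, _, _, hi⟩ | ⟨hni, _⟩
  · rcases kj with ⟨_, _, _, _, hj⟩ | ⟨hnj, _⟩
    · have hg := sort_gap (show q - 1 - (j:ℕ) ≤ q - 1 - (i:ℕ) by omega)
        (show q - 1 - (i:ℕ) < A.card by omega)
      omega
    · omega
  · omega

end G1facts

lemma of_mem_G201 {n : ℕ} {e : Fin n → ℕ} (he : e ∈ G201 n) :
    InvSeq e ∧ D e ∧ No201 e := by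
  rw [G201, Finset.mem_insert, Finset.mem_union] at he
  rcases he with rfl | he | he
  · refine ⟨fun i => by simp [map0], fun i j _ h => by simp [map0] at h,
      fun i j k _ _ h => by simp [map0] at h⟩
  · rw [Finset.mem_image] at he
    obtain ⟨⟨q, A⟩, hx, rfl⟩ := he
    dsimp only
    have hr := PG1_basic hx
    have hq := (mem_PG1.mp hx).1
    have key := mapG1_key hx
    refine ⟨fun i => ?_, fun i j hij h0 => ?_, fun i j k hij hjk h1 => ?_⟩
    · rcases key i with ⟨hs, hlt, _, hle, _⟩ | ⟨_, h⟩ <;> omega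
    · -- D
      rcases key i with ⟨hsi, hlti, _, _, _⟩ | ⟨_, h⟩
      · rcases key j with ⟨hsj, hltj, _, _, _⟩ | ⟨_, h'⟩
        · exact mapG1_dec hx i j hsi (by omega) hltj
        · omega
      · omega
    · -- No201
      rcases key k with ⟨hsk, hltk, _, _, _⟩ | ⟨_, h''⟩
      · rcases key j with ⟨hsj, hltj, _, _, _⟩ | ⟨hnj, h'⟩
        · have := mapG1_dec hx j k hsj (by omega) hltk
          omega
        · -- e j = 0 and j outside the run; since j < k and k < q, j < q - A.card
          rcases key i with ⟨hsi, hlti, _, _, _⟩ | ⟨hni, h⟩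
          · omega
          · omega
      · omega
  · rw [Finset.mem_image] at he
    obtain ⟨⟨d, ⟨s, c⟩, W⟩, hx, rfl⟩ := he
    dsimp only
    obtain ⟨hd, hs, hc, hW, hWne⟩ := mem_PG2.mp hx
    have key : ∀ i : Fin n, (c ≤ (i:ℕ) ∧ mapG2 n d s c W i = c) ∨ mapG2 n d s c W i = 0 := by
      intro i
      unfold mapG2
      by_cases h : (s ≤ (i:ℕ) ∧ (i:ℕ) < d) ∨ (i:ℕ) ∈ W
      · rw [if_pos h]
        left
        rcases h with h | h
        · omega
        · have := hW _ h
          omega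
      · rw [if_neg h]
        right; rfl
    refine ⟨fun i => ?_, fun i j hij h0 => ?_, fun i j k hij hjk h1 => ?_⟩
    · rcases key i with ⟨h1, h2⟩ | h <;> omega
    · rcases key i with ⟨_, h⟩ | h <;> rcases key j with ⟨_, h'⟩ | h' <;> omega
    · rcases key i with ⟨_, h⟩ | h <;> rcases key j with ⟨_, h'⟩ | h' <;>
        rcases key k with ⟨_, h''⟩ | h'' <;> omega

end Stmt5

namespace Stmt5
open Finset

lemma mem_G201 {n : ℕ} (hn : 0 < n) {e : Fin n → ℕ}
    (he : InvSeq e) (hD : D e) (hN : No201 e) : e ∈ G201 n := by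
  by_cases hz : ∀ i, e i = 0
  · have : e = map0 n := funext fun i => hz i
    rw [this, G201]
    exact Finset.mem_insert_self _ _
  push_neg at hz
  obtain ⟨i0, hi0⟩ := hz
  have hPne : (univ.filter fun i : Fin n => e i ≠ 0).Nonempty := ⟨i0, by simp [hi0]⟩
  set m := (univ.filter fun i : Fin n => e i ≠ 0).min' hPne with hm
  set M := (univ.filter fun i : Fin n => e i ≠ 0).max' hPne with hM
  have hm_mem : e m ≠ 0 := by have := Finset.min'_mem _ hPne; simpa using this
  have hM_mem : e M ≠ 0 := by have := Finset.max'_mem _ hPne; simpa using this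
  have hm_min : ∀ i : Fin n, e i ≠ 0 → m ≤ i := fun i hi =>
    Finset.min'_le _ i (by simpa using hi)
  have hM_max : ∀ i : Fin n, e i ≠ 0 → i ≤ M := fun i hi =>
    Finset.le_max' _ i (by simpa using hi)
  have ham : e m ≤ (m:ℕ) := he m
  have hm1 : 1 ≤ (m:ℕ) := by omega
  have hmM : m ≤ M := hM_max m hm_mem
  by_cases hcont : ∀ i : Fin n, m ≤ i → i ≤ M → e i ≠ 0
  · -- G1 branch : support is the interval [m, M]
    have hsupp : ∀ i : Fin n, e i ≠ 0 ↔ (m ≤ i ∧ i ≤ M) := fun i =>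
      ⟨fun h => ⟨hm_min i h, hM_max i h⟩, fun ⟨h1, h2⟩ => hcont i h1 h2⟩
    set q := (M:ℕ) + 1 with hq
    set A := (univ.filter fun i : Fin n => e i ≠ 0).image
      (fun i : Fin n => e i + ((M:ℕ) - (i:ℕ))) with hA
    have hinj : Set.InjOn (fun i : Fin n => e i + ((M:ℕ) - (i:ℕ)))
        ↑(univ.filter fun i : Fin n => e i ≠ 0) := by
      intro i hi j hj hij
      simp only [Finset.coe_filter, Set.mem_setOf_eq] at hi hj
      dsimp only at hij
      by_contra hne
      rcases Ne.lt_or_gt hne with h | h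
      · have h1 := hD i j h hi.2
        have h2 := hM_max j hj.2
        rw [Fin.lt_def] at h
        rw [Fin.le_def] at h2
        omega
      · have h1 := hD j i h hj.2
        have h2 := hM_max i hi.2
        rw [Fin.lt_def] at h
        rw [Fin.le_def] at h2
        omega
    have hsuppIcc : (univ.filter fun i : Fin n => e i ≠ 0) = Finset.Icc m M := by
      ext i
      simp only [Finset.mem_filter, Finset.mem_univ, true_and, Finset.mem_Icc]
      exact hsupp i
    have hcard : A.card = q - (m:ℕ) := by
      rw [hA, Finset.card_image_of_injOn hinj, hsuppIcc, Fin.card_Icc]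
      try rw [Fin.le_def] at hmM
      try omega
    set r := A.card with hr
    have hrq : r = q - (m:ℕ) := hcard
    set g : ℕ → ℕ := fun k =>
      e ⟨(M:ℕ) - k, Nat.lt_of_le_of_lt (Nat.sub_le _ _) M.isLt⟩ + k with hg
    have hgmono : ∀ k k' : ℕ, k < k' → k' < r → g k < g k' := by
      intro k k' hkk hk'
      have hposk' : (m:ℕ) ≤ (M:ℕ) - k' := by omega
      have hlt : (⟨(M:ℕ) - k', Nat.lt_of_le_of_lt (Nat.sub_le _ _) M.isLt⟩ : Fin n)
          < ⟨(M:ℕ) - k, Nat.lt_of_le_of_lt (Nat.sub_le _ _) M.isLt⟩ := by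
        rw [Fin.lt_def]
        dsimp only
        omega
      have hne' : e (⟨(M:ℕ) - k', Nat.lt_of_le_of_lt (Nat.sub_le _ _) M.isLt⟩ : Fin n) ≠ 0 := by
        rw [hsupp]
        constructor
        · rw [Fin.le_def]; dsimp only; omega
        · rw [Fin.le_def]; dsimp only; omega
      have := hD _ _ hlt hne'
      rw [hg]
      dsimp only
      omega
    have hglist : ∀ k, k < r → g k ∈ A := by
      intro k hk
      rw [hA, Finset.mem_image]
      refine ⟨⟨(M:ℕ) - k, Nat.lt_of_le_of_lt (Nat.sub_le _ _) M.isLt⟩, ?_, ?_⟩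
      · simp only [Finset.mem_filter, Finset.mem_univ, true_and]
        rw [hsupp]
        constructor
        · rw [Fin.le_def]; dsimp only; omega
        · rw [Fin.le_def]; dsimp only; omega
      · dsimp only
        rw [hg]
        dsimp only
        omega
    have htoF : (List.map g (List.range r)).toFinset = A := by
      ext x
      simp only [List.mem_toFinset, List.mem_map, List.mem_range]
      constructor
      · rintro ⟨k, hk, rfl⟩
        exact hglist k hk
      · intro hx
        rw [hA, Finset.mem_image] at hx
        obtain ⟨i, hi, rfl⟩ := hx
        simp only [Finset.mem_filter, Finset.mem_univ, true_and] at hi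
        have hiM := hM_max i hi
        have him := hm_min i hi
        rw [Fin.le_def] at hiM him
        refine ⟨(M:ℕ) - (i:ℕ), by omega, ?_⟩
        rw [hg]
        dsimp only
        have hieq : (⟨(M:ℕ) - ((M:ℕ) - (i:ℕ)),
            Nat.lt_of_le_of_lt (Nat.sub_le _ _) M.isLt⟩ : Fin n) = i :=
          Fin.ext (by dsimp only; omega)
        rw [hieq]
        try omega
    have hsorted : List.Pairwise (· < ·) (List.map g (List.range r)) := by
      rw [List.pairwise_map]
      refine List.Pairwise.imp_of_mem ?_ (List.pairwise_lt_range (n := r))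
      intro a b ha hb hab
      exact hgmono a b hab (List.mem_range.mp hb)
    have hlist : A.sort (· ≤ ·) = List.map g (List.range r) := by
      refine List.Perm.eq_of_pairwise' (Finset.pairwise_sort _ _) (hsorted.imp le_of_lt) ?_
      refine List.perm_of_nodup_nodup_toFinset_eq (Finset.sort_nodup _ _) hsorted.nodup ?_
      rw [Finset.sort_toFinset, htoF]
    refine Finset.mem_insert_of_mem (Finset.mem_union_left _ ?_)
    rw [Finset.mem_image]
    refine ⟨⟨q, A⟩, ?_, ?_⟩
    · rw [mem_PG1]
      refine ⟨⟨by rw [Fin.le_def] at hmM; omega, by have := M.isLt; omega⟩, ?_, ?_⟩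
      · intro w hw
        rw [hA, Finset.mem_image] at hw
        obtain ⟨i, hi, rfl⟩ := hw
        simp only [Finset.mem_filter, Finset.mem_univ, true_and] at hi
        have h1 := he i
        have h2 := hM_max i hi
        rw [Fin.le_def] at h2
        omega
      · exact ⟨e i0 + ((M:ℕ) - (i0:ℕ)), Finset.mem_image_of_mem _ (by simp [hi0])⟩
    · dsimp only
      funext i
      unfold mapG1
      rw [← hr]
      have hiM : e i ≠ 0 → ((m:ℕ) ≤ (i:ℕ) ∧ (i:ℕ) ≤ (M:ℕ)) := by
        intro h
        have h1 := hm_min i h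
        have h2 := hM_max i h
        rw [Fin.le_def] at h1 h2
        exact ⟨h1, h2⟩
      by_cases hrun : q - r ≤ (i:ℕ) ∧ (i:ℕ) < q
      · rw [if_pos hrun]
        have hk : q - 1 - (i:ℕ) = (M:ℕ) - (i:ℕ) := by omega
        have hkr : (M:ℕ) - (i:ℕ) < r := by omega
        have hk2 : (M:ℕ) - (i:ℕ) < (List.map g (List.range r)).length := by
          simp only [List.length_map, List.length_range]
          exact hkr
        rw [hlist, hk, List.getD_eq_getElem _ _ hk2, List.getElem_map, List.getElem_range]
        rw [hg]
        dsimp only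
        have hieq : (⟨(M:ℕ) - ((M:ℕ) - (i:ℕ)),
            Nat.lt_of_le_of_lt (Nat.sub_le _ _) M.isLt⟩ : Fin n) = i :=
          Fin.ext (by dsimp only; omega)
        rw [hieq]
        omega
      · rw [if_neg hrun]
        by_contra hne
        have := hiM (fun h => hne h.symm)
        omega
  · -- G2 branch
    push_neg at hcont
    obtain ⟨z, hz1, hz2, hz3⟩ := hcont
    have hZne : (univ.filter fun i : Fin n => m < i ∧ e i = 0).Nonempty := by
      refine ⟨z, ?_⟩
      simp only [Finset.mem_filter, Finset.mem_univ, true_and]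
      refine ⟨lt_of_le_of_ne hz1 ?_, hz3⟩
      intro h
      rw [← h] at hz3
      exact hm_mem hz3
    set d := (univ.filter fun i : Fin n => m < i ∧ e i = 0).min' hZne with hd
    have hd_mem : m < d ∧ e d = 0 := by
      have := Finset.min'_mem _ hZne
      rw [Finset.mem_filter] at this
      exact this.2
    have hd_min : ∀ i : Fin n, m < i → e i = 0 → d ≤ i := fun i h1 h2 =>
      Finset.min'_le _ i (by simp [h1, h2])
    have hdM : d < M := by
      have hzM : z ≤ M := hz2
      have hzne : z ≠ M := by
        intro h
        rw [h] at hz3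
        exact hM_mem hz3
      have h1 : d ≤ z := hd_min z (lt_of_le_of_ne hz1 (by
        intro h
        rw [← h] at hz3
        exact hm_mem hz3)) hz3
      have : z < M := lt_of_le_of_ne hzM hzne
      exact lt_of_le_of_lt h1 this
    set a := e m with ha
    -- run [m, d) is constant = a, and beyond d everything is 0 or a
    have hrun_ne : ∀ i : Fin n, m ≤ i → i < d → e i ≠ 0 := by
      intro i h1 h2 h0
      rcases eq_or_lt_of_le h1 with h | h
      · rw [← h] at h0
        exact hm_mem h0
      · exact absurd (hd_min i h h0) (by omega)
    have hrun_val : ∀ i : Fin n, m ≤ i → i < d → e i = e M := by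
      intro i h1 h2
      have hiM : i < M := lt_trans h2 hdM
      have l1 : e i ≤ e M := hN i d M h2 hdM (by
        rw [hd_mem.2]
        omega)
      have l2 : e M ≤ e i := hD i M hiM (hrun_ne i h1 h2)
      omega
    have haM : a = e M := hrun_val m (le_refl m) hd_mem.1
    have htail : ∀ k : Fin n, d ≤ k → e k = 0 ∨ e k = a := by
      intro k hk
      rcases eq_or_lt_of_le hk with h | h
      · left
        rw [← h]
        exact hd_mem.2
      · by_cases h0 : e k = 0
        · left; exact h0
        · right
          have l1 : e k ≤ a := hD m k (lt_trans hd_mem.1 h) hm_mem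
          have l2 : a ≤ e k := by
            have := hN m d k hd_mem.1 h (by rw [hd_mem.2]; omega)
            exact this
          omega
    refine Finset.mem_insert_of_mem (Finset.mem_union_right _ ?_)
    rw [Finset.mem_image]
    refine ⟨⟨(d:ℕ), ⟨(m:ℕ), a⟩,
      (univ.filter fun i : Fin n => d < i ∧ e i ≠ 0).image Fin.val⟩, ?_, ?_⟩
    · rw [mem_PG2]
      have hdn := M.isLt
      rw [Fin.lt_def] at hdM hd_mem
      refine ⟨⟨by omega, by omega⟩, ⟨by omega, by omega⟩, ⟨by omega, ham⟩, ?_, ?_⟩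
      · intro w hw
        simp only [Finset.mem_image, Finset.mem_filter, Finset.mem_univ, true_and] at hw
        obtain ⟨i, ⟨h1, _⟩, rfl⟩ := hw
        rw [Fin.lt_def] at h1
        have := i.isLt
        omega
      · refine ⟨(M:ℕ), ?_⟩
        simp only [Finset.mem_image, Finset.mem_filter, Finset.mem_univ, true_and]
        exact ⟨M, ⟨by rw [Fin.lt_def]; omega, hM_mem⟩, rfl⟩
    · dsimp only
      funext i
      unfold mapG2
      by_cases hcase : ((m:ℕ) ≤ (i:ℕ) ∧ (i:ℕ) < (d:ℕ)) ∨
          (i:ℕ) ∈ (univ.filter fun i : Fin n => d < i ∧ e i ≠ 0).image Fin.val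
      · rw [if_pos hcase]
        rcases hcase with h | h
        · rw [ha]
          exact ((hrun_val i (by rw [Fin.le_def]; exact h.1)
            (by rw [Fin.lt_def]; exact h.2)).trans haM.symm).symm
        · simp only [Finset.mem_image, Finset.mem_filter, Finset.mem_univ, true_and] at h
          obtain ⟨i', ⟨h1, h2⟩, hval⟩ := h
          rw [show i' = i from Fin.ext hval] at h1 h2
          rcases htail i (le_of_lt h1) with h0 | h0
          · exact absurd h0 h2
          · exact h0.symm
      · rw [if_neg hcase]
        push_neg at hcase
        obtain ⟨hc1, hc2⟩ := hcase
        by_contra hne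
        have hne' : e i ≠ 0 := fun h => hne h.symm
        have h1 := hm_min i hne'
        rw [Fin.le_def] at h1
        by_cases hid : (i:ℕ) < (d:ℕ)
        · have := hc1 h1
          omega
        · have hdi : d < i := by
            rw [Fin.lt_def]
            rcases Nat.eq_or_lt_of_le (le_of_not_gt hid) with h | h
            · exfalso
              apply hne'
              rw [show i = d from Fin.ext h.symm]
              exact hd_mem.2
            · exact h
          apply hc2
          simp only [Finset.mem_image, Finset.mem_filter, Finset.mem_univ, true_and]
          exact ⟨i, ⟨hdi, hne'⟩, rfl⟩

end Stmt5

namespace Stmt5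
open Finset

lemma mapG1_inj_aux {n q q' : ℕ} {A A' : Finset ℕ}
    (hx : (⟨q, A⟩ : (_ : ℕ) × Finset ℕ) ∈ PG1 n)
    (hy : (⟨q', A'⟩ : (_ : ℕ) × Finset ℕ) ∈ PG1 n)
    (h : mapG1 n q A = mapG1 n q' A') : ¬ q' < q := by
  intro hlt
  have hq := (mem_PG1.mp hx).1
  have hr := PG1_basic hx
  have hi : q - 1 < n := by omega
  have k1 := mapG1_key hx ⟨q - 1, hi⟩
  have k2 := mapG1_key hy ⟨q - 1, hi⟩
  rw [← h] at k2
  simp only at k1 k2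
  omega

lemma mapG1_inj_aux2 {n q : ℕ} {A A' : Finset ℕ}
    (hx : (⟨q, A⟩ : (_ : ℕ) × Finset ℕ) ∈ PG1 n)
    (hy : (⟨q, A'⟩ : (_ : ℕ) × Finset ℕ) ∈ PG1 n)
    (h : mapG1 n q A = mapG1 n q A') : ¬ A.card < A'.card := by
  intro hlt
  have hq := (mem_PG1.mp hx).1
  have hr := PG1_basic hx
  have hr' := PG1_basic hy
  -- evaluate at position q - A'.card : inside run of A', outside run of A
  have hi : q - A'.card < n := by omega
  have k1 := mapG1_key hx ⟨q - A'.card, hi⟩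
  have k2 := mapG1_key hy ⟨q - A'.card, hi⟩
  rw [← h] at k2
  simp only at k1 k2
  omega

lemma mapG1_inj {n : ℕ} : Set.InjOn (fun x : (_ : ℕ) × Finset ℕ =>
    mapG1 n x.1 x.2) (PG1 n) := by
  rintro ⟨q, A⟩ hx ⟨q', A'⟩ hy h
  dsimp only at h
  have hqeq : q = q' := by
    have h1 := mapG1_inj_aux hx hy h
    have h2 := mapG1_inj_aux hy hx h.symm
    omega
  subst hqeq
  have hcardeq : A.card = A'.card := by
    have h1 := mapG1_inj_aux2 hx hy h
    have h2 := mapG1_inj_aux2 hy hx h.symm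
    omega
  have hq := (mem_PG1.mp hx).1
  have hr := PG1_basic hx
  have hr' := PG1_basic hy
  have hgetD : ∀ k, k < A.card →
      (A.sort (· ≤ ·)).getD k 0 = (A'.sort (· ≤ ·)).getD k 0 := by
    intro k hk
    have hw : q - 1 - k < n := by omega
    have k1 := mapG1_key hx ⟨q - 1 - k, hw⟩
    have k2 := mapG1_key hy ⟨q - 1 - k, hw⟩
    rw [← h] at k2
    simp only at k1 k2
    have hkk : q - 1 - (q - 1 - k) = k := by omega
    rw [hkk] at k1 k2
    rw [← hcardeq] at k2
    omega
  have hlist : A.sort (· ≤ ·) = A'.sort (· ≤ ·) := by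
    apply List.ext_get
    · rw [Finset.length_sort, Finset.length_sort, hcardeq]
    · intro k h1 h2
      rw [Finset.length_sort] at h1
      rw [← List.getD_eq_get _ 0 _, ← List.getD_eq_get _ 0 _]
      exact hgetD k h1
  have hA : A = A' := by
    have := congrArg List.toFinset hlist
    rwa [Finset.sort_toFinset, Finset.sort_toFinset] at this
  rw [hA]

lemma mapG2_inj_auxs {n d s c d' s' c' : ℕ} {W W' : Finset ℕ}
    (hx : (⟨d, ⟨s, c⟩, W⟩ : (_ : ℕ) × ((_ : ℕ) × ℕ) × Finset ℕ) ∈ PG2 n)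
    (hy : (⟨d', ⟨s', c'⟩, W'⟩ : (_ : ℕ) × ((_ : ℕ) × ℕ) × Finset ℕ) ∈ PG2 n)
    (h : mapG2 n d s c W = mapG2 n d' s' c' W') : ¬ s < s' := by
  intro hlt
  obtain ⟨hd, hs, hc, hW, hWne⟩ := mem_PG2.mp hx
  obtain ⟨hd', hs', hc', hW', hWne'⟩ := mem_PG2.mp hy
  have hi : s < n := by omega
  have h1 := congrFun h ⟨s, hi⟩
  rw [evalG2 hi, evalG2 hi, if_pos (Or.inl ⟨le_refl s, by omega⟩), if_neg] at h1
  · omega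
  · rintro (h' | h')
    · omega
    · have := hW' _ h'
      omega

lemma mapG2_inj_auxd {n d s c d' c' : ℕ} {W W' : Finset ℕ}
    (hx : (⟨d, ⟨s, c⟩, W⟩ : (_ : ℕ) × ((_ : ℕ) × ℕ) × Finset ℕ) ∈ PG2 n)
    (hy : (⟨d', ⟨s, c'⟩, W'⟩ : (_ : ℕ) × ((_ : ℕ) × ℕ) × Finset ℕ) ∈ PG2 n)
    (h : mapG2 n d s c W = mapG2 n d' s c' W' ) : ¬ d < d' := by
  intro hlt
  obtain ⟨hd, hs, hc, hW, hWne⟩ := mem_PG2.mp hx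
  obtain ⟨hd', hs', hc', hW', hWne'⟩ := mem_PG2.mp hy
  have hi : d < n := by omega
  have h1 := congrFun h ⟨d, hi⟩
  rw [evalG2 hi, evalG2 hi, if_neg, if_pos (Or.inl ⟨by omega, hlt⟩)] at h1
  · omega
  · rintro (h' | h')
    · omega
    · have := hW _ h'
      omega

lemma mapG2_inj {n : ℕ} : Set.InjOn (fun x : (_ : ℕ) × ((_ : ℕ) × ℕ) × Finset ℕ =>
    mapG2 n x.1 x.2.1.1 x.2.1.2 x.2.2) (PG2 n) := by
  rintro ⟨d, ⟨s, c⟩, W⟩ hx ⟨d', ⟨s', c'⟩, W'⟩ hy h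
  dsimp only at h
  have hseq : s = s' := by
    have h1 := mapG2_inj_auxs hx hy h
    have h2 := mapG2_inj_auxs hy hx h.symm
    omega
  subst hseq
  have hdeq : d = d' := by
    have h1 := mapG2_inj_auxd hx hy h
    have h2 := mapG2_inj_auxd hy hx h.symm
    omega
  subst hdeq
  obtain ⟨hd, hs, hc, hW, hWne⟩ := mem_PG2.mp hx
  obtain ⟨hd', hs', hc', hW', hWne'⟩ := mem_PG2.mp hy
  have hceq : c = c' := by
    have hi : s < n := by omega
    have h1 := congrFun h ⟨s, hi⟩
    rw [evalG2 hi, evalG2 hi, if_pos (Or.inl ⟨le_refl s, by omega⟩),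
      if_pos (Or.inl ⟨le_refl s, by omega⟩)] at h1
    exact h1
  subst hceq
  have hWeq : W = W' := by
    ext w
    constructor
    · intro hw
      have hb := hW _ hw
      have hi : w < n := by omega
      have h1 := congrFun h ⟨w, hi⟩
      rw [evalG2 hi, evalG2 hi, if_pos (Or.inr hw)] at h1
      by_cases hc2 : (s ≤ w ∧ w < d) ∨ w ∈ W'
      · rcases hc2 with h' | h'
        · omega
        · exact h'
      · rw [if_neg hc2] at h1
        omega
    · intro hw
      have hb := hW' _ hw
      have hi : w < n := by omega
      have h1 := congrFun h ⟨w, hi⟩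
      rw [evalG2 hi, evalG2 hi] at h1
      rw [if_pos (Or.inr hw)] at h1
      by_cases hc2 : (s ≤ w ∧ w < d) ∨ w ∈ W
      · rcases hc2 with h' | h'
        · omega
        · exact h'
      · rw [if_neg hc2] at h1
        omega
  rw [hWeq]

end Stmt5

namespace Stmt5
open Finset

lemma map0_not_mem_G1 {n : ℕ} : map0 n ∉ (PG1 n).image (fun x => mapG1 n x.1 x.2) := by
  rw [Finset.mem_image]
  rintro ⟨⟨q, A⟩, hx, h⟩
  have hq := (mem_PG1.mp hx).1
  have hr := PG1_basic hx
  have hi : q - 1 < n := by omega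
  have k := mapG1_key hx ⟨q - 1, hi⟩
  rw [h] at k
  simp only [map0] at k
  omega

lemma map0_not_mem_G2 {n : ℕ} :
    map0 n ∉ (PG2 n).image (fun x => mapG2 n x.1 x.2.1.1 x.2.1.2 x.2.2) := by
  rw [Finset.mem_image]
  rintro ⟨⟨d, ⟨s, c⟩, W⟩, hx, h⟩
  obtain ⟨hd, hs, hc, hW, hWne⟩ := mem_PG2.mp hx
  have hi : s < n := by omega
  have h1 := congrFun h ⟨s, hi⟩
  dsimp only at h1
  rw [evalG2 hi, if_pos (Or.inl ⟨le_refl s, by omega⟩)] at h1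
  simp only [map0] at h1
  omega

lemma G1_disj_G2 {n : ℕ} : Disjoint ((PG1 n).image (fun x => mapG1 n x.1 x.2))
    ((PG2 n).image (fun x => mapG2 n x.1 x.2.1.1 x.2.1.2 x.2.2)) := by
  rw [Finset.disjoint_left]
  rintro e he1 he2
  rw [Finset.mem_image] at he1 he2
  obtain ⟨⟨q, A⟩, hx, rfl⟩ := he1
  obtain ⟨⟨d, ⟨s, c⟩, W⟩, hy, h⟩ := he2
  obtain ⟨hd, hs, hc, hW, hWne⟩ := mem_PG2.mp hy
  obtain ⟨w0, hw0⟩ := hWne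
  have hw0b := hW _ hw0
  have hq := (mem_PG1.mp hx).1
  have hr := PG1_basic hx
  dsimp only at h
  -- positions s < d < w0 have values c, 0, c in mapG2
  have his : s < n := by omega
  have hid : d < n := by omega
  have hiw : w0 < n := by omega
  have e1 := congrFun h ⟨s, his⟩
  have e2 := congrFun h ⟨d, hid⟩
  have e3 := congrFun h ⟨w0, hiw⟩
  rw [evalG2 his, if_pos (Or.inl ⟨le_refl s, by omega⟩)] at e1
  rw [evalG2 hid, if_neg (by
    rintro (h' | h')
    · omega
    · have := hW _ h'
      omega)] at e2
  rw [evalG2 hiw, if_pos (Or.inr hw0)] at e3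
  have k1 := mapG1_key hx ⟨s, his⟩
  have k2 := mapG1_key hx ⟨d, hid⟩
  have k3 := mapG1_key hx ⟨w0, hiw⟩
  simp only at k1 k2 k3
  omega

lemma powerset_ne_card (S : Finset ℕ) :
    (S.powerset.filter Finset.Nonempty).card = 2 ^ S.card - 1 := by
  have h : S.powerset.filter Finset.Nonempty = S.powerset.erase ∅ := by
    ext A
    simp only [Finset.mem_filter, Finset.mem_erase, Finset.nonempty_iff_ne_empty]
    tauto
  rw [h, Finset.card_erase_of_mem (Finset.empty_mem_powerset S), Finset.card_powerset]

lemma card_G201 {n : ℕ} (hn : 1 ≤ n) :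
    (G201 n).card = 2 ^ (n+1) - (n+1).choose 3 - 2 * n - 1 := by
  rw [G201, Finset.card_insert_of_notMem (by
    rw [Finset.mem_union]
    rintro (h | h)
    · exact map0_not_mem_G1 h
    · exact map0_not_mem_G2 h),
    Finset.card_union_of_disjoint G1_disj_G2]
  rw [Finset.card_image_of_injOn mapG1_inj, Finset.card_image_of_injOn mapG2_inj]
  have hc1 : (PG1 n).card = ∑ q ∈ Icc 2 n, (2 ^ (q-1) - 1) := by
    rw [PG1, Finset.card_sigma]
    refine Finset.sum_congr rfl fun q hq => ?_
    simp only [Finset.mem_Icc] at hq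
    rw [powerset_ne_card, Nat.card_Icc]
    rw [show q - 1 + 1 - 1 = q - 1 from by omega]
  have hc2 : (PG2 n).card = ∑ d ∈ Icc 1 (n-1), d.choose 2 * (2 ^ (n-1-d) - 1) := by
    rw [PG2, Finset.card_sigma]
    refine Finset.sum_congr rfl fun d hd => ?_
    simp only [Finset.mem_Icc] at hd
    rw [Finset.card_product, Finset.card_sigma, powerset_ne_card, Nat.card_Icc]
    have e1 : ∑ s ∈ Icc 1 (d-1), (Icc 1 s).card = d.choose 2 := by
      have := gauss_Icc' (d-1)
      rw [show d - 1 + 1 = d from by omega] at this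
      rw [← this]
      refine Finset.sum_congr rfl fun s hs => ?_
      rw [Nat.card_Icc]
      omega
    rw [e1, show n - 1 + 1 - (d+1) = n - 1 - d from by omega]
  rw [hc1, hc2]
  have hB := sumB (n-1)
  have hS := sumS (n-1)
  rw [show n-1+1 = n from by omega, show n-1+2 = n+1 from by omega] at hB hS
  have hpow : 2 ^ (n+1) = 2 * 2 ^ n := by ring
  omega

theorem count201 {n : ℕ} (hn : 1 ≤ n) :
    Nat.card {e : Fin n → ℕ // InvSeq e ∧ Avoids e [0,1,2] ∧ Avoids e [2,0,1]}
      = 2 ^ (n + 1) - (n+1).choose 3 - 2 * n - 1 := by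
  have hiff : ∀ e : Fin n → ℕ,
      (InvSeq e ∧ Avoids e [0,1,2] ∧ Avoids e [2,0,1]) ↔ e ∈ G201 n := by
    intro e
    constructor
    · rintro ⟨hI, h1, h2⟩
      exact mem_G201 hn hI ((avoids_012 hn hI).mp h1) ((avoids_201 e).mp h2)
    · intro h
      obtain ⟨hI, hD, hN⟩ := of_mem_G201 h
      exact ⟨hI, (avoids_012 hn hI).mpr hD, (avoids_201 e).mpr hN⟩
  rw [Nat.card_congr (Equiv.subtypeEquivRight hiff), Nat.card_eq_fintype_card,
    Fintype.card_coe]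
  exact card_G201 hn

end Stmt5

theorem stmt_5 (n : ℕ) (hn : 1 ≤ n) (p q : List ℕ)
    (hpq : (p, q) = ([0,1,2], [2,0,1]) ∨ (p, q) = ([0,1,2], [2,1,0])) :
    Nat.card {e : Fin n → ℕ // InvSeq e ∧ Avoids e p ∧ Avoids e q}
      = 2 ^ (n + 1) - Nat.choose (n + 1) 3 - 2 * n - 1 := by
  rcases hpq with h | h <;>
    (rw [Prod.mk.injEq] at h; obtain ⟨rfl, rfl⟩ := h)
  · exact Stmt5.count201 hn
  · exact Stmt5.count210 hn
end

section
/- For every integer n ≥ 1, the number of inversion sequences of length n avoiding both patterns 010 and 011 equals the sum ∑_{k=0}^{n−1} (n−k)^k, i.e. |I_n(010,011)| = ∑_{k=0}^{n−1} (n−k)^k. -/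
/-!
Since `e₀ = 0`, an inversion sequence avoids `010` and `011` iff, once an entry is positive, all
later entries are positive and pairwise distinct. Such an `e` is `n - k` zeros (`k < n` because
`e₀ = 0`) followed by `k` distinct values with `1 ≤ e_{n-k+j} ≤ n - k + j`. Choosing these left to
right, each entry has `n - k + j` admissible values of which `j` are already used, so there are
`(n - k)^k` choices.
-/

open Function

variable {n : ℕ}

lemma contains_010_iff (e : Fin n → ℕ) :
    Contains e [0, 1, 0] ↔ ∃ i j k : Fin n, i < j ∧ j < k ∧ e i < e j ∧ e k = e i := by
  constructor
  · rintro ⟨s, hs, he⟩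
    exact ⟨s 0, s 1, s 2, hs (by decide), hs (by decide),
      (he 0 1).1.1 (by decide), ((he 2 0).2.1 rfl)⟩
  · rintro ⟨i, j, k, hij, hjk, hlt, heq⟩
    refine ⟨![i, j, k], Fin.strictMono_iff_lt_succ.2 ?_, ?_⟩
    · intro a; fin_cases a <;> assumption
    · intro a b
      fin_cases a <;> fin_cases b <;> simp [heq] <;> omega

lemma contains_011_iff (e : Fin n → ℕ) :
    Contains e [0, 1, 1] ↔ ∃ i j k : Fin n, i < j ∧ j < k ∧ e i < e j ∧ e k = e j := by
  constructor
  · rintro ⟨s, hs, he⟩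
    exact ⟨s 0, s 1, s 2, hs (by decide), hs (by decide),
      (he 0 1).1.1 (by decide), ((he 2 1).2.1 rfl)⟩
  · rintro ⟨i, j, k, hij, hjk, hlt, heq⟩
    refine ⟨![i, j, k], Fin.strictMono_iff_lt_succ.2 ?_, ?_⟩
    · intro a; fin_cases a <;> assumption
    · intro a b
      fin_cases a <;> fin_cases b <;> simp [heq] <;> omega

def ZeroThenDistinct (e : Fin n → ℕ) : Prop :=
  ∀ i j, i < j → 0 < e i → 0 < e j ∧ e i ≠ e j

lemma avoids_010_and_avoids_011_iff {e : Fin n → ℕ} (he : InvSeq e) :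
    Avoids e [0, 1, 0] ∧ Avoids e [0, 1, 1] ↔ ZeroThenDistinct e := by
  simp only [Avoids, contains_010_iff, contains_011_iff, not_exists, not_and]
  constructor
  · rintro ⟨h010, h011⟩ i j hij hi
    obtain ⟨z, hz⟩ : ∃ z : Fin n, (z : ℕ) = 0 := ⟨⟨0, i.pos⟩, rfl⟩
    have hez : e z = 0 := by have := he z; omega
    have hzi : z < i := Fin.lt_def.2 (by have := he i; omega)
    exact ⟨Nat.pos_of_ne_zero fun hj => h010 z i j hzi hij (by omega) (by omega),
      fun hij' => h011 z i j hzi hij (by omega) hij'.symm⟩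
  · intro h
    refine ⟨fun i j k hij hjk hlt heq => ?_, fun i j k hij hjk hlt heq => ?_⟩
    · rcases Nat.eq_zero_or_pos (e i) with hi | hi
      · exact absurd (h j k hjk (by omega)).1 (by omega)
      · exact (h i k (hij.trans hjk) hi).2 heq.symm
    · exact (h j k hjk (by omega)).2 heq.symm

/-- Placements of non-attacking rooks on the Ferrers board with row lengths `b j`. -/
abbrev InjectiveBelow {k : ℕ} (b : Fin k → ℕ) : Type :=
  {f : Fin k → ℕ // Injective f ∧ ∀ j, f j < b j}

instance {k : ℕ} (b : Fin k → ℕ) : Finite (InjectiveBelow b) :=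
  Finite.of_injective (fun f : InjectiveBelow b => fun j => (⟨f.1 j, f.2.2 j⟩ : Fin (b j)))
    fun _ _ h => Subtype.ext <| funext fun j => congrArg Fin.val (congrFun h j)

def InjectiveBelow.snocEquiv {k : ℕ} (b : Fin (k + 1) → ℕ) :
    InjectiveBelow b ≃
      Σ g : InjectiveBelow (Fin.init b),
        ↥(Finset.range (b (Fin.last k)) \ Finset.univ.image g.1) where
  toFun f :=
    have hinj := Fin.snoc_injective_iff.1 (by rw [Fin.snoc_init_self]; exact f.2.1)
    ⟨⟨Fin.init f.1, hinj.1, fun j => f.2.2 _⟩,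
      ⟨f.1 (Fin.last k), by simpa [f.2.2 (Fin.last k)] using hinj.2⟩⟩
  invFun gv := ⟨Fin.snoc gv.1.1 gv.2.1,
    Fin.snoc_injective_iff.2 ⟨gv.1.2.1, by simpa using (Finset.mem_sdiff.1 gv.2.2).2⟩,
    Fin.lastCases (by simpa using (Finset.mem_sdiff.1 gv.2.2).1)
      fun j => by simpa [Fin.init] using gv.1.2.2 j⟩
  left_inv f := Subtype.ext (Fin.snoc_init_self f.1)
  right_inv gv :=
    Sigma.subtype_ext (Subtype.ext (Fin.init_snoc (α := fun _ => ℕ) gv.2.1 gv.1.1))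
      (Fin.snoc_last (α := fun _ => ℕ) gv.2.1 gv.1.1)

theorem card_injectiveBelow_of_monotone :
    ∀ {k : ℕ} (b : Fin k → ℕ), Monotone b → Nat.card (InjectiveBelow b) = ∏ j, (b j - j)
  | 0, b, _ => by
    rw [Fin.prod_univ_zero, Nat.card_eq_one_iff_unique]
    exact ⟨inferInstance, ⟨⟨finZeroElim, fun i => i.elim0, finZeroElim⟩⟩⟩
  | k + 1, b, hb => by
    have hfiber (g : InjectiveBelow (Fin.init b)) :
        (Finset.range (b (Fin.last k)) \ Finset.univ.image g.1).card = b (Fin.last k) - k := by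
      have hsub : Finset.univ.image g.1 ⊆ Finset.range (b (Fin.last k)) := by
        simpa [Finset.subset_iff] using fun j => (g.2.2 j).trans_le (hb (Fin.le_last _))
      rw [Finset.card_sdiff_of_subset hsub, Finset.card_image_of_injective _ g.2.1,
        Finset.card_range, Finset.card_univ, Fintype.card_fin]
    have := Fintype.ofFinite (InjectiveBelow (Fin.init b))
    rw [Nat.card_congr (InjectiveBelow.snocEquiv b), Nat.card_sigma]
    simp only [Nat.card_eq_finsetCard, hfiber, Finset.sum_const, Finset.card_univ,
      ← Nat.card_eq_fintype_card, smul_eq_mul]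
    rw [card_injectiveBelow_of_monotone (Fin.init b) (hb.comp Fin.strictMono_castSucc.monotone),
      Fin.prod_univ_castSucc]
    rfl

theorem card_injectiveBelow_add (m k : ℕ) :
    Nat.card (InjectiveBelow fun j : Fin k => m + j) = m ^ k := by
  rw [card_injectiveBelow_of_monotone _ fun i j h => by simpa using h]
  simp

lemma Fin.mem_iff_lt_card_of_isLowerSet {s : Finset (Fin n)} (hs : IsLowerSet (s : Set (Fin n)))
    (i : Fin n) : i ∈ s ↔ (i : ℕ) < s.card := by
  rcases hs.eq_univ_or_Iio with h | ⟨a, h⟩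
  · simp [Finset.coe_eq_univ.1 h]
  · rw [← Finset.coe_Iio, Finset.coe_inj] at h
    rw [h, Finset.mem_Iio, Fin.card_Iio, Fin.lt_def]

namespace ZeroThenDistinct

variable {e : Fin n → ℕ}

lemma eq_of_eq (h : ZeroThenDistinct e) {i j : Fin n} (hi : 0 < e i) (hij : e i = e j) :
    i = j := by
  rcases lt_trichotomy i j with hlt | rfl | hgt
  · exact absurd hij (h i j hlt hi).2
  · rfl
  · exact absurd hij.symm (h j i hgt (hij ▸ hi)).2

lemma eq_zero_iff (h : ZeroThenDistinct e) (i : Fin n) : e i = 0 ↔ (i : ℕ) < zeroStat e := by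
  have hlower :
      IsLowerSet ((Finset.univ.filter fun i => e i = 0 : Finset (Fin n)) : Set (Fin n)) := by
    intro b a hab hb
    simp only [Finset.mem_coe, Finset.mem_filter_univ] at hb ⊢
    rcases hab.lt_or_eq with hlt | rfl
    · by_contra ha
      exact absurd hb (h a b hlt (Nat.pos_of_ne_zero ha)).1.ne'
    · exact hb
  simpa [zeroStat] using Fin.mem_iff_lt_card_of_isLowerSet hlower i

end ZeroThenDistinct

def padZeros (n k : ℕ) (f : Fin k → ℕ) (i : Fin n) : ℕ :=
  if h : n - k ≤ i then f ⟨i - (n - k), by omega⟩ + 1 else 0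

section padZeros

variable {k : ℕ} {f : Fin k → ℕ}

lemma padZeros_eq_zero_iff (i : Fin n) : padZeros n k f i = 0 ↔ (i : ℕ) < n - k := by
  unfold padZeros
  split <;> simp <;> omega

lemma padZeros_sub_add (j : Fin k) (h : n - k + j < n) :
    padZeros n k f ⟨n - k + j, h⟩ = f j + 1 := by
  simp [padZeros]

lemma invSeq_padZeros (hf : ∀ j, f j < n - k + j) : InvSeq (padZeros n k f) := by
  intro i
  unfold padZeros
  split
  · have := hf ⟨i - (n - k), by omega⟩
    simp only at this
    omega
  · omega

lemma zeroThenDistinct_padZeros (hf : Injective f) : ZeroThenDistinct (padZeros n k f) := by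
  intro i j hij hi
  have hpos (l : Fin n) : 0 < padZeros n k f l ↔ n - k ≤ l := by
    rw [Nat.pos_iff_ne_zero, Ne, padZeros_eq_zero_iff, not_lt]
  have hik := (hpos i).1 hi
  have hjk : n - k ≤ j := hik.trans (Fin.le_def.1 hij.le)
  refine ⟨(hpos j).2 hjk, fun heq => ?_⟩
  simp only [padZeros, dif_pos hik, dif_pos hjk, Nat.add_right_cancel_iff] at heq
  have := Fin.val_eq_of_eq (hf heq)
  simp only at this
  omega

lemma zeroStat_padZeros : zeroStat (padZeros n k f) = n - k := by
  simp only [zeroStat, padZeros_eq_zero_iff, Fin.card_filter_val_lt]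
  omega

end padZeros

lemma ZeroThenDistinct.exists_padZeros (hn : 1 ≤ n) {e : Fin n → ℕ} (he : InvSeq e)
    (h : ZeroThenDistinct e) :
    ∃ k < n, ∃ f : InjectiveBelow (fun j : Fin k => n - k + j), padZeros n k f.1 = e := by
  have hzero := h.eq_zero_iff
  obtain ⟨k, hkn, hzk⟩ : ∃ k < n, zeroStat e = n - k := by
    have hz : 0 < zeroStat e := (hzero ⟨0, hn⟩).1 (Nat.le_zero.1 (he _))
    have : zeroStat e ≤ n := (Finset.card_filter_le _ _).trans_eq (Finset.card_fin n)
    exact ⟨n - zeroStat e, by omega, by omega⟩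
  simp only [hzk] at hzero
  let pos (j : Fin k) : Fin n := ⟨n - k + j, by omega⟩
  have hpos (j : Fin k) : 0 < e (pos j) := by
    rw [Nat.pos_iff_ne_zero, Ne, hzero]
    simp [pos]
  refine ⟨k, hkn, ⟨fun j => e (pos j) - 1, fun j₁ j₂ hj => ?_, fun j => ?_⟩, ?_⟩
  · have := h.eq_of_eq (j := pos j₂) (hpos j₁) (Nat.sub_one_cancel (hpos j₁) (hpos j₂) hj)
    simpa [pos, Fin.ext_iff] using this
  · have := he (pos j)
    have := hpos j
    simp only [pos] at *
    omega
  · funext i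
    unfold padZeros
    split
    · have hi : pos ⟨i - (n - k), by omega⟩ = i := Fin.ext (by simp [pos]; omega)
      have := (hzero i).not.2 (by omega)
      simp only [hi]
      omega
    · exact ((hzero i).2 (by omega)).symm

noncomputable def zeroPaddingEquiv (hn : 1 ≤ n) :
    (Σ k : Fin n, InjectiveBelow (fun j : Fin k => n - k + j)) ≃
      {e : Fin n → ℕ // InvSeq e ∧ ZeroThenDistinct e} :=
  Equiv.ofBijective
    (fun kf => ⟨padZeros n kf.1 kf.2.1, invSeq_padZeros kf.2.2.2,
      zeroThenDistinct_padZeros kf.2.2.1⟩)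
    ⟨by
      rintro ⟨k, f⟩ ⟨k', f'⟩ h
      have he := congrArg Subtype.val h
      obtain rfl : k = k' := Fin.ext <| by
        have := congrArg zeroStat he
        simp only [zeroStat_padZeros] at this
        omega
      obtain rfl : f = f' := Subtype.ext <| funext fun j => by
        have := congrFun he ⟨n - k + j, by omega⟩
        simpa [padZeros_sub_add] using this
      rfl,
    fun ⟨e, he, h⟩ =>
      have ⟨k, hk, f, hf⟩ := h.exists_padZeros hn he
      ⟨⟨⟨k, hk⟩, f⟩, Subtype.ext hf⟩⟩

theorem stmt_6 (n : ℕ) (hn : 1 ≤ n) :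
    Nat.card {e : Fin n → ℕ // InvSeq e ∧ Avoids e [0,1,0] ∧ Avoids e [0,1,1]}
      = ∑ k ∈ Finset.range n, (n - k) ^ k := by
  have hchar : {e : Fin n → ℕ // InvSeq e ∧ Avoids e [0,1,0] ∧ Avoids e [0,1,1]} ≃
      {e : Fin n → ℕ // InvSeq e ∧ ZeroThenDistinct e} :=
    Equiv.subtypeEquivRight fun _ => and_congr_right avoids_010_and_avoids_011_iff
  rw [Nat.card_congr (hchar.trans (zeroPaddingEquiv hn).symm), Nat.card_sigma,
    ← Fin.sum_univ_eq_sum_range]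
  simp only [card_injectiveBelow_add]
end

section
/- For every integer n ≥ 1 and every pattern pair p ∈ {(021,210), (021,201)}, the set I_n(p) of inversion sequences of length n avoiding both patterns of p coincides with I_n(021), the set of inversion sequences of length n avoiding 021, and its cardinality equals the large Schröder number: |I_n(p)| = ∑_{k=0}^{n−1} binom(n−1+k, 2k) · C_k, where C_k is the k-th Catalan number. -/
/-!
In an inversion sequence `e 0 = 0`, so `e` contains `021` exactly when some nonzero entry is
smaller than an earlier entry; both `210` and `201` force such an entry as well. Hence
`I_n(021, 210) = I_n(021, 201) = I_n(021)` consists of the inversion sequences whose nonzero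
entries are weak left-to-right maxima.

Such a sequence is built from the left: at position `i`, with `b ≥ 1` the largest entry so far
(or `1`), the next entry is `0` or a value in `[b, i]`. The number `T r h` (`admissibleCount`)
of ways to fill `r` more positions depends only on `h = i - b` and satisfies
`T (r + 1) h = T r (h + 1) + ∑_{u=1}^{h+1} T r u`, `T 0 h = 1`, with `|I_n(021)| = T (n - 1) 0`.
Writing `T r h = ∑_j multichoose h j * G r j`, the recursion becomes
`G (r + 1) t = ∑_{j ≥ t} G r j + ∑_{j ≥ t - 1} G r j`, which holds for the number `G r t`
(`schroderPaths`) of Schröder paths ending at height `t`, namely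
`∑_k C(r + k, 2k + t) * ballot (t + k) k`. At `t = 0` this is `∑_k C(r + k, 2k) * C_k`.
-/

open Finset

lemma contains_021_iff {n : ℕ} {e : Fin n → ℕ} :
    Contains e [0, 2, 1] ↔ ∃ i j k, i < j ∧ j < k ∧ e i < e k ∧ e k < e j := by
  constructor
  · rintro ⟨s, hs, h⟩
    exact ⟨s 0, s 1, s 2, hs (by decide), hs (by decide), (h 0 2).1.1 (by decide),
      (h 2 1).1.1 (by decide)⟩
  · rintro ⟨i, j, k, hij, hjk, hik, hkj⟩
    refine ⟨![i, j, k], Fin.strictMono_iff_lt_succ.2 fun a => ?_, fun a b => ?_⟩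
    · fin_cases a <;> simpa
    · fin_cases a <;> fin_cases b <;> simp <;> omega

lemma Contains.exists_210 {n : ℕ} {e : Fin n → ℕ} (h : Contains e [2, 1, 0]) :
    ∃ i j k, i < j ∧ j < k ∧ e k < e j ∧ e j < e i := by
  obtain ⟨s, hs, h⟩ := h
  exact ⟨s 0, s 1, s 2, hs (by decide), hs (by decide), (h 2 1).1.1 (by decide),
    (h 1 0).1.1 (by decide)⟩

lemma Contains.exists_201 {n : ℕ} {e : Fin n → ℕ} (h : Contains e [2, 0, 1]) :
    ∃ i j k, i < j ∧ j < k ∧ e j < e k ∧ e k < e i := by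
  obtain ⟨s, hs, h⟩ := h
  exact ⟨s 0, s 1, s 2, hs (by decide), hs (by decide), (h 1 2).1.1 (by decide),
    (h 2 0).1.1 (by decide)⟩

/-- `l` is a valid continuation, from position `i` on, of a sequence in `I(021)` whose largest
entry so far is `b`, or `0` when `b = 1`. -/
def Admissible (i b : ℕ) {r : ℕ} (l : Fin r → ℕ) : Prop :=
  ∀ j, l j ≤ i + j ∧ (l j = 0 ∨ b ≤ l j ∧ ∀ j' < j, l j' ≤ l j)

section Admissible

variable {i b r : ℕ} {l : Fin r → ℕ}

lemma Admissible.le_of_lt (h : Admissible i b l) {j k : Fin r} (hjk : j < k) (hk : l k ≠ 0) :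
    l j ≤ l k :=
  ((h k).2.resolve_left hk).2 j hjk

lemma Admissible.avoids_210 (h : Admissible i b l) : Avoids l [2, 1, 0] := by
  intro hc
  obtain ⟨j, k, m, hjk, hkm, hmk, hkj⟩ := hc.exists_210
  have := h.le_of_lt hjk (by omega)
  omega

lemma Admissible.avoids_201 (h : Admissible i b l) : Avoids l [2, 0, 1] := by
  intro hc
  obtain ⟨j, k, m, hjk, hkm, hkm', hmj⟩ := hc.exists_201
  have := h.le_of_lt (hjk.trans hkm) (by omega)
  omega

lemma admissible_cons_iff {v : ℕ} {t : Fin r → ℕ} :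
    Admissible i b (Fin.cons v t : Fin (r + 1) → ℕ) ↔
      v = 0 ∧ Admissible (i + 1) b t ∨ b ≤ v ∧ v ≤ i ∧ Admissible (i + 1) v t := by
  simp only [Admissible, Fin.forall_fin_succ, Fin.cons_zero, Fin.cons_succ, Fin.val_zero,
    Fin.val_succ, Fin.succ_lt_succ_iff, Fin.succ_pos, forall_const, Fin.not_lt_zero,
    IsEmpty.forall_iff, implies_true, and_true, add_zero]
  grind

end Admissible

lemma admissible_zero_one_iff {n : ℕ} {e : Fin n → ℕ} :
    Admissible 0 1 e ↔ InvSeq e ∧ Avoids e [0, 2, 1] := by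
  constructor
  · intro h
    refine ⟨fun j => by simpa using (h j).1, fun hc => ?_⟩
    obtain ⟨i, j, k, -, hjk, hik, hkj⟩ := contains_021_iff.1 hc
    have := h.le_of_lt hjk (by omega)
    omega
  · rintro ⟨hinv, havoid⟩ k
    refine ⟨by simpa using hinv k, ?_⟩
    by_cases hk : e k = 0
    · exact .inl hk
    refine .inr ⟨by omega, fun j hjk => ?_⟩
    by_contra! hkj
    have hj : 0 < (j : ℕ) := by have := hinv j; omega
    have h0 : e ⟨0, j.pos⟩ < e k := (hinv ⟨0, j.pos⟩).trans_lt (Nat.pos_of_ne_zero hk)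
    exact havoid (contains_021_iff.2 ⟨⟨0, j.pos⟩, j, k, hj, hjk, h0, hkj⟩)

def admissibleSet : (r i b : ℕ) → Finset (Fin r → ℕ)
  | 0, _, _ => {Fin.elim0}
  | r + 1, i, b =>
      (admissibleSet r (i + 1) b).image (Fin.cons 0) ∪
        (Ico b (i + 1)).biUnion fun v => (admissibleSet r (i + 1) v).image (Fin.cons v)

lemma mem_admissibleSet {r i b : ℕ} {l : Fin r → ℕ} :
    l ∈ admissibleSet r i b ↔ Admissible i b l := by
  induction r generalizing i b with
  | zero => simp [admissibleSet, Admissible, Subsingleton.elim l Fin.elim0]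
  | succ r ih =>
    induction l using Fin.consCases with
    | cons v t =>
      simp only [admissibleSet, mem_union, mem_image, mem_biUnion, mem_Ico, Fin.cons_inj, ih,
        admissible_cons_iff]
      grind

lemma card_admissibleSet_succ {r i b : ℕ} (hb : 1 ≤ b) :
    #(admissibleSet (r + 1) i b) =
      #(admissibleSet r (i + 1) b) + ∑ v ∈ Ico b (i + 1), #(admissibleSet r (i + 1) v) := by
  have hcons (v : ℕ) (s : Finset (Fin r → ℕ)) :
      #(s.image (Fin.cons (α := fun _ => ℕ) v)) = #s :=
    card_image_of_injective _ (Fin.cons_right_injective (α := fun _ => ℕ) v)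
  rw [admissibleSet, card_union_of_disjoint, hcons, card_biUnion]
  · simp only [hcons]
  · intro v _ w _ hvw
    simp only [Function.onFun, disjoint_left, mem_image]
    rintro _ ⟨t, _, rfl⟩ ⟨t', _, h⟩
    exact hvw (Fin.cons_inj.1 h).1.symm
  · simp only [disjoint_left, mem_image, mem_biUnion, mem_Ico]
    rintro _ ⟨t, _, rfl⟩ ⟨v, ⟨hbv, _⟩, t', _, h⟩
    have := (Fin.cons_inj.1 h).1
    omega

/-- Lattice paths with `a` up and `b` down steps that never go below their starting level. -/
def ballot : ℕ → ℕ → ℕ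
  | _, 0 => 1
  | 0, _ + 1 => 0
  | a + 1, b + 1 => if a < b then 0 else ballot a (b + 1) + ballot (a + 1) b

lemma ballot_zero_right (a : ℕ) : ballot a 0 = 1 := by
  cases a <;> simp [ballot]

lemma ballot_eq_zero_of_lt {a b : ℕ} (h : a < b) : ballot a b = 0 := by
  match a, b with
  | 0, _ + 1 => simp [ballot]
  | a + 1, b + 1 => simp [ballot, show a < b by omega]

lemma ballot_succ_succ {a b : ℕ} (h : b ≤ a) :
    ballot (a + 1) (b + 1) = ballot a (b + 1) + ballot (a + 1) b := by
  simp [ballot, show ¬a < b by omega]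

lemma ballot_one_right (a : ℕ) : ballot a 1 = a := by
  induction a with
  | zero => simp [ballot]
  | succ a ih => rw [ballot_succ_succ a.zero_le, ih, ballot_zero_right]

lemma ballot_add_choose {a b : ℕ} (h : b ≤ a) :
    ballot a (b + 1) + (a + b + 1).choose b = (a + b + 1).choose (b + 1) := by
  induction a generalizing b with
  | zero =>
    obtain rfl : b = 0 := by omega
    simp [ballot]
  | succ a iha =>
    induction b with
    | zero => simp [ballot_one_right]
    | succ c ihb =>
      rcases (Nat.lt_or_eq_of_le h : c + 1 < a + 1 ∨ c + 1 = a + 1) with hc | hc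
      · have h1 := iha (b := c + 1) (by omega)
        have h2 := ihb (by omega)
        have p1 := Nat.choose_succ_succ' (a + c + 2) c
        have p2 := Nat.choose_succ_succ' (a + c + 2) (c + 1)
        rw [ballot_succ_succ (by omega), show a + 1 + (c + 1) + 1 = a + c + 2 + 1 by omega]
        rw [show a + (c + 1) + 1 = a + c + 2 by omega] at h1
        rw [show a + 1 + c + 1 = a + c + 2 by omega] at h2
        omega
      · obtain rfl : a = c := by omega
        rw [ballot_eq_zero_of_lt (by omega), zero_add,
          show a + 1 + (a + 1) + 1 = 2 * (a + 1) + 1 by ring, Nat.choose_symm_half]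

lemma ballot_self (k : ℕ) : ballot k k = catalan k := by
  cases k with
  | zero => simp [ballot]
  | succ k =>
    have h := ballot_add_choose (a := k + 1) (b := k) (by omega)
    have hsucc := Nat.choose_succ_right_eq (k + 1 + k + 1) k
    have hcat := succ_mul_catalan_eq_centralBinom (k + 1)
    rw [Nat.centralBinom, show 2 * (k + 1) = k + 1 + k + 1 by ring] at hcat
    rw [show k + 1 + k + 1 - k = k + 2 by omega] at hsucc
    apply Nat.eq_of_mul_eq_mul_left (show 0 < k + 2 by omega)
    nlinarith

/-- Schröder paths (steps `(1, 1)`, `(1, -1)`, `(2, 0)`, never below the axis) from the origin to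
`(2 * r - h, h)`: `k` down steps, `h + k` up steps and `r - h - k` flat steps. -/
def schroderPaths (r h : ℕ) : ℕ :=
  ∑ k ∈ range (r + 1), (r + k).choose (2 * k + h) * ballot (h + k) k

lemma schroderPaths_eq_sum_range {r h N : ℕ} (hN : r + 1 ≤ N + h) :
    schroderPaths r h = ∑ k ∈ range N, (r + k).choose (2 * k + h) * ballot (h + k) k := by
  have key (M : ℕ) (hM : r + 1 - h ≤ M) :
      ∑ k ∈ range M, (r + k).choose (2 * k + h) * ballot (h + k) k =
        ∑ k ∈ range (r + 1 - h), (r + k).choose (2 * k + h) * ballot (h + k) k :=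
    (sum_subset (range_subset_range.2 hM) fun k _ hk => by
      simp only [mem_range] at hk
      rw [Nat.choose_eq_zero_of_lt (by omega), zero_mul]).symm
  rw [schroderPaths, key (r + 1) (by omega), key N (by omega)]

lemma schroderPaths_eq_zero {r h : ℕ} (hrh : r < h) : schroderPaths r h = 0 :=
  sum_eq_zero fun k _ => by rw [Nat.choose_eq_zero_of_lt (by omega), zero_mul]

lemma schroderPaths_zero_zero : schroderPaths 0 0 = 1 := by
  simp [schroderPaths, ballot_zero_right]

lemma schroderPaths_zero_right (r : ℕ) :
    schroderPaths r 0 = ∑ k ∈ range (r + 1), (r + k).choose (2 * k) * catalan k := by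
  simp [schroderPaths, ballot_self]

lemma schroderPaths_succ_succ (r h : ℕ) :
    schroderPaths (r + 1) (h + 1) =
      schroderPaths (r + 1) (h + 2) + schroderPaths r (h + 1) + schroderPaths r h := by
  have hsplit : ∑ k ∈ range (r + 2), (r + k).choose (2 * k + h) * ballot (h + 1 + k) k =
      schroderPaths (r + 1) (h + 2) + schroderPaths r h := by
    rw [schroderPaths_eq_sum_range (r := r) (N := r + 2) (by omega),
      sum_range_succ' _ (r + 1), sum_range_succ' _ (r + 1),
      schroderPaths_eq_sum_range (N := r + 1) (by omega),
      ballot_zero_right, ballot_zero_right, ← add_assoc, ← sum_add_distrib]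
    congr 1
    refine sum_congr rfl fun k _ => ?_
    rw [show h + 1 + (k + 1) = h + k + 1 + 1 by ring, ballot_succ_succ (by omega), mul_add,
      add_comm]
    ring_nf
  rw [show schroderPaths (r + 1) (h + 2) + schroderPaths r (h + 1) + schroderPaths r h =
      schroderPaths r (h + 1) + (schroderPaths (r + 1) (h + 2) + schroderPaths r h) by ring,
    ← hsplit, schroderPaths_eq_sum_range (r := r) (N := r + 2) (by omega), ← sum_add_distrib]
  refine sum_congr rfl fun k _ => ?_
  rw [show r + 1 + k = r + k + 1 by ring, show 2 * k + (h + 1) = 2 * k + h + 1 by ring,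
    Nat.choose_succ_succ']
  ring_nf

lemma schroderPaths_succ_zero (r : ℕ) :
    schroderPaths (r + 1) 0 = schroderPaths (r + 1) 1 + schroderPaths r 0 := by
  rw [schroderPaths, sum_range_succ' _ (r + 1),
    schroderPaths_eq_sum_range (r := r) (N := r + 2) (by omega), sum_range_succ' _ (r + 1),
    schroderPaths_eq_sum_range (h := 1) (N := r + 1) (by omega), ← add_assoc,
    ← sum_add_distrib]
  congr 1
  · refine sum_congr rfl fun k _ => ?_
    rw [zero_add, ballot_succ_succ le_rfl, ballot_eq_zero_of_lt k.lt_succ_self, zero_add,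
      show r + 1 + (k + 1) = r + 1 + k + 1 by ring, show 2 * (k + 1) + 0 = 2 * k + 1 + 1 by ring,
      Nat.choose_succ_succ']
    ring_nf
  · simp [ballot_zero_right]

lemma sum_Ico_schroderPaths (r t : ℕ) :
    ∑ j ∈ Ico t (r + 1), schroderPaths r j =
      schroderPaths r t + ∑ j ∈ Ico (t + 1) (r + 1), schroderPaths r j := by
  rcases le_or_gt t r with h | h
  · exact sum_eq_sum_Ico_succ_bot (by omega) _
  · rw [Ico_eq_empty_of_le (by omega), Ico_eq_empty_of_le (by omega), schroderPaths_eq_zero h,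
      sum_empty, add_zero]

/-- At `t = 0` the truncated `t - 1 = 0` is intended: both sums then run over all heights. -/
lemma schroderPaths_succ (r t : ℕ) :
    schroderPaths (r + 1) t =
      ∑ j ∈ Ico t (r + 1), schroderPaths r j +
        ∑ j ∈ Ico (t - 1) (r + 1), schroderPaths r j := by
  suffices h : ∀ t, schroderPaths (r + 1) (t + 1) =
      ∑ j ∈ Ico (t + 1) (r + 1), schroderPaths r j +
        ∑ j ∈ Ico t (r + 1), schroderPaths r j by
    cases t with
    | zero => rw [schroderPaths_succ_zero, h 0, sum_Ico_schroderPaths r 0]; ring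
    | succ t => exact h t
  intro t
  -- downward induction on `t`, from `t ≥ r + 1` where everything vanishes
  induction hd : r + 1 - t generalizing t with
  | zero =>
    rw [schroderPaths_eq_zero (by omega), Ico_eq_empty_of_le (by omega),
      Ico_eq_empty_of_le (by omega), sum_empty, add_zero]
  | succ d ih =>
    rw [schroderPaths_succ_succ, ih (t + 1) (by omega), sum_Ico_schroderPaths r t,
      sum_Ico_schroderPaths r (t + 1)]
    ring

lemma sum_mul_sum_Ico_sub (c g : ℕ → ℕ) {s N M : ℕ} (h : N + s ≤ M) :
    ∑ t ∈ range M, c t * ∑ j ∈ Ico (t - s) N, g j =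
      ∑ j ∈ range N, (∑ t ∈ range (j + s + 1), c t) * g j := by
  simp_rw [mul_sum, sum_mul]
  exact sum_comm' fun t j => by simp only [mem_range, mem_Ico]; omega

lemma sum_range_multichoose (h j : ℕ) :
    ∑ t ∈ range (j + 1), h.multichoose t = (h + 1).multichoose j := by
  induction j with
  | zero => simp [Nat.multichoose_zero_right]
  | succ j ih => rw [sum_range_succ, ih, Nat.multichoose_succ_succ, add_comm]

lemma sum_Ico_multichoose (h j : ℕ) :
    ∑ u ∈ Ico 1 (h + 2), u.multichoose j = (h + 1).multichoose (j + 1) := by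
  induction h with
  | zero => simp [Nat.multichoose_one, Nat.multichoose_succ_succ, Nat.multichoose_zero_succ]
  | succ h ih =>
    rw [sum_Ico_succ_top (by omega), ih, Nat.multichoose_succ_succ (h + 1), add_comm]

def admissibleCount (r h : ℕ) : ℕ :=
  ∑ j ∈ range (r + 1), h.multichoose j * schroderPaths r j

lemma admissibleCount_zero_left (h : ℕ) : admissibleCount 0 h = 1 := by
  simp [admissibleCount, Nat.multichoose_zero_right, schroderPaths_zero_zero]

lemma admissibleCount_zero_right (r : ℕ) : admissibleCount r 0 = schroderPaths r 0 := by
  rw [admissibleCount, sum_eq_single_of_mem 0 (by simp) fun j _ hj => ?_]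
  · simp [Nat.multichoose_zero_right]
  · obtain ⟨j, rfl⟩ := Nat.exists_eq_succ_of_ne_zero hj
    simp [Nat.multichoose_zero_succ]

lemma admissibleCount_succ (r h : ℕ) :
    admissibleCount (r + 1) h =
      admissibleCount r (h + 1) + ∑ u ∈ Ico 1 (h + 2), admissibleCount r u := by
  have hswap₀ := sum_mul_sum_Ico_sub h.multichoose (schroderPaths r) (s := 0) (N := r + 1)
    (M := r + 2) (by omega)
  have hswap₁ := sum_mul_sum_Ico_sub h.multichoose (schroderPaths r) (s := 1) (N := r + 1)
    (M := r + 2) (by omega)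
  simp only [Nat.sub_zero, add_zero, sum_range_multichoose] at hswap₀ hswap₁
  simp only [admissibleCount, schroderPaths_succ, mul_add, sum_add_distrib, hswap₀, hswap₁]
  rw [sum_comm]
  congr 1
  refine sum_congr rfl fun j _ => ?_
  rw [← sum_mul, sum_Ico_multichoose]

lemma card_admissibleSet {r i b : ℕ} (hb : 1 ≤ b) (hbi : b ≤ i) :
    #(admissibleSet r i b) = admissibleCount r (i - b) := by
  induction r generalizing i b with
  | zero => simp [admissibleSet, admissibleCount_zero_left]
  | succ r ih =>
    rw [card_admissibleSet_succ hb, ih hb (by omega),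
      sum_congr rfl fun v hv => ih (by simp at hv; omega) (by simp at hv; omega),
      sum_Ico_reflect (admissibleCount r) b (m := i + 1) (n := i + 1) (by omega),
      admissibleCount_succ, show i + 1 - b = i - b + 1 by omega,
      show i + 1 + 1 - (i + 1) = 1 by omega,
      show i + 1 + 1 - b = i - b + 2 by omega]

theorem stmt_8 (n : ℕ) (hn : 1 ≤ n) (p q : List ℕ)
    (hpq : (p, q) = ([0,2,1], [2,1,0]) ∨ (p, q) = ([0,2,1], [2,0,1])) :
    (∀ e : Fin n → ℕ,
      (InvSeq e ∧ Avoids e p ∧ Avoids e q) ↔ (InvSeq e ∧ Avoids e [0,2,1])) ∧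
    Nat.card {e : Fin n → ℕ // InvSeq e ∧ Avoids e p ∧ Avoids e q}
      = ∑ k ∈ Finset.range n, Nat.choose (n - 1 + k) (2 * k) * catalan k := by
  obtain ⟨rfl, hq⟩ :
      p = [0, 2, 1] ∧ ∀ e : Fin n → ℕ, Admissible 0 1 e → Avoids e q := by
    rcases hpq with h | h <;> obtain ⟨rfl, rfl⟩ := Prod.mk.inj h
    exacts [⟨rfl, fun e he => he.avoids_210⟩, ⟨rfl, fun e he => he.avoids_201⟩]
  have hiff (e : Fin n → ℕ) :
      (InvSeq e ∧ Avoids e [0, 2, 1] ∧ Avoids e q) ↔ Admissible 0 1 e := by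
    rw [← and_assoc, ← admissible_zero_one_iff]
    exact ⟨And.left, fun he => ⟨he, hq e he⟩⟩
  refine ⟨fun e => by rw [hiff, admissible_zero_one_iff], ?_⟩
  obtain ⟨m, rfl⟩ : ∃ m, n = m + 1 := ⟨n - 1, by omega⟩
  rw [Nat.card_congr (Equiv.subtypeEquivRight fun e => (hiff e).trans mem_admissibleSet.symm),
    Nat.card_eq_fintype_card, Fintype.card_coe, card_admissibleSet_succ le_rfl, Ico_self,
    sum_empty, add_zero, card_admissibleSet le_rfl le_rfl, Nat.sub_self,
    admissibleCount_zero_right, schroderPaths_zero_right, Nat.add_sub_cancel]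
end

section
/- Let z_{n,k} denote the number of inversion sequences e of length n avoiding both patterns 101 and 110 with zero(e) = k. Then z_{1,k} = 1 if k = 1 and 0 otherwise, and for all n ≥ 2 and 1 ≤ k ≤ n: z_{n,k} = z_{n−1,k−1} + k·z_{n−1,k} + ∑_{j=k+1}^{n−1} z_{n−1,j} (where z_{n−1,0} = 0). Consequently z_{n,k} = T_{n,k}, the triangle defined by the same recurrence with T_{1,i} = δ_{1,i}, which counts indecomposable set partitions of [n+1] whose k-th block (blocks ordered by decreasing smallest element) contains n+1. -/
/-- `z n k` is the number of `(101,110)`-avoiding inversion sequences of length `n`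
with exactly `k` zero entries. -/
noncomputable def z (n k : ℕ) : ℕ :=
  Nat.card {e : Fin n → ℕ //
    InvSeq e ∧ Avoids e [1,0,1] ∧ Avoids e [1,1,0] ∧ zeroStat e = k}

/-- The triangle `T n k` (OEIS A086211) defined by `T 1 i = δ 1 i` and
`T n k = T (n-1) (k-1) + k * T (n-1) k + ∑_{j=k+1}^{n-1} T (n-1) j` for `1 ≤ k ≤ n`. -/
def T : ℕ → ℕ → ℕ
  | 0, _ => 0
  | 1, k => if k = 1 then 1 else 0
  | n + 2, k =>
      if k = 0 then 0
      else T (n + 1) (k - 1) + k * T (n + 1) k +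
        ∑ j ∈ Finset.Icc (k + 1) (n + 1), T (n + 1) j

open Finset

/-!
Deleting the leading `0` of `e ∈ I_{m+1}` and decrementing every entry gives `y ∈ I_m`, and `e`
is recovered from `y` together with the set `O` of zeros of `y` that were `1`s of `e`.
Avoiding `101` and `110` says that no entry after the first of two equal entries is smaller
than them; for `e` this means that `y` has the same property and that, once two positions of `O`
have occurred, every later zero of `y` lies in `O`. Such an `O` has at most one element or is a
final segment of the zeros of `y`. As `zero(e) = zero(y) + 1 - |O|`, writing `j = zero(y)`
there are `1`, `j`, `1` choices of `O` giving `zero(e) = k ≥ 1` according as `k = j + 1`, `k = j`,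
`k < j`, and none otherwise; summing over `y` gives the recurrence, which `T` shares.
-/

def NoDropAfterRepeat {n : ℕ} (e : Fin n → ℕ) : Prop :=
  ∀ i j l : Fin n, i < j → i < l → e i = e j → e i ≤ e l

instance {n : ℕ} : DecidablePred (@NoDropAfterRepeat n) :=
  fun e => by unfold NoDropAfterRepeat; infer_instance

section Patterns

variable {n : ℕ} {e : Fin n → ℕ}

lemma strictMono_vecCons₃ {i j l : Fin n} (hij : i < j) (hjl : j < l) :
    StrictMono ![i, j, l] :=
  Fin.strictMono_iff_lt_succ.2 fun a => by fin_cases a <;> simpa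

lemma contains_101_iff :
    Contains e [1, 0, 1] ↔ ∃ i j l, i < j ∧ j < l ∧ e j < e i ∧ e i = e l := by
  constructor
  · rintro ⟨s, hs, h⟩
    exact ⟨s 0, s 1, s 2, hs (by decide), hs (by decide), (h 1 0).1.1 (by decide),
      (h 0 2).2.1 rfl⟩
  · rintro ⟨i, j, l, hij, hjl, hji, hil⟩
    refine ⟨![i, j, l], strictMono_vecCons₃ hij hjl, fun a b => ?_⟩
    fin_cases a <;> fin_cases b <;> simp <;> omega

lemma contains_110_iff :
    Contains e [1, 1, 0] ↔ ∃ i j l, i < j ∧ j < l ∧ e i = e j ∧ e l < e i := by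
  constructor
  · rintro ⟨s, hs, h⟩
    exact ⟨s 0, s 1, s 2, hs (by decide), hs (by decide), (h 0 1).2.1 rfl,
      (h 2 0).1.1 (by decide)⟩
  · rintro ⟨i, j, l, hij, hjl, hij', hli⟩
    refine ⟨![i, j, l], strictMono_vecCons₃ hij hjl, fun a b => ?_⟩
    fin_cases a <;> fin_cases b <;> simp <;> omega

lemma avoids_101_and_avoids_110_iff :
    Avoids e [1, 0, 1] ∧ Avoids e [1, 1, 0] ↔ NoDropAfterRepeat e := by
  simp only [Avoids, contains_101_iff, contains_110_iff, NoDropAfterRepeat]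
  constructor
  · rintro ⟨h101, h110⟩ i j l hij hil hej
    by_contra! hli
    rcases lt_trichotomy l j with hlj | rfl | hjl
    · exact h101 ⟨i, l, j, hil, hlj, hli, hej⟩
    · omega
    · exact h110 ⟨i, j, l, hij, hjl, hej, hli⟩
  · intro h
    refine ⟨fun ⟨i, j, l, hij, hjl, hji, hil⟩ => ?_,
      fun ⟨i, j, l, hij, hjl, hij', hli⟩ => ?_⟩
    · exact absurd (h i l j (hij.trans hjl) hij hil) (by omega)
    · exact absurd (h i j l hij (hij.trans hjl) hij') (by omega)

end Patterns

section UpperSubsets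

variable {α : Type*} [LinearOrder α]

def IsUpperIn (Z O : Finset α) : Prop := ∀ x ∈ O, ∀ l ∈ Z, x ≤ l → l ∈ O

def ClosedAfterPair (Z O : Finset α) : Prop :=
  ∀ a ∈ O, ∀ b ∈ O, a < b → ∀ l ∈ Z, a < l → l ∈ O

instance (Z : Finset α) : DecidablePred (IsUpperIn Z) :=
  fun O => by unfold IsUpperIn; infer_instance

instance (Z : Finset α) : DecidablePred (ClosedAfterPair Z) :=
  fun O => by unfold ClosedAfterPair; infer_instance

variable {Z O O' : Finset α}

lemma IsUpperIn.subset_or_subset (hO : IsUpperIn Z O) (hO' : IsUpperIn Z O')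
    (hOZ : O ⊆ Z) (hO'Z : O' ⊆ Z) : O ⊆ O' ∨ O' ⊆ O := by
  by_contra! h
  obtain ⟨x, hxO, hxO'⟩ := not_subset.1 h.1
  obtain ⟨y, hyO', hyO⟩ := not_subset.1 h.2
  rcases le_total x y with hxy | hyx
  · exact hyO (hO x hxO y (hO'Z hyO') hxy)
  · exact hxO' (hO' y hyO' x (hOZ hxO) hyx)

lemma exists_isUpperIn_card {c : ℕ} (hc : c ≤ Z.card) :
    ∃ O ⊆ Z, IsUpperIn Z O ∧ O.card = c := by
  induction c with
  | zero => exact ⟨∅, empty_subset _, by simp [IsUpperIn], rfl⟩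
  | succ c ih =>
    obtain ⟨O, hOZ, hO, rfl⟩ := ih (by omega)
    have hne : (Z \ O).Nonempty := by
      rw [← card_pos, card_sdiff_of_subset hOZ]; omega
    set x := (Z \ O).max' hne
    have hx : x ∈ Z \ O := max'_mem _ hne
    refine ⟨insert x O, insert_subset (mem_sdiff.1 hx).1 hOZ, ?_,
      card_insert_of_notMem (mem_sdiff.1 hx).2⟩
    intro y hy l hl hyl
    rw [mem_insert] at hy ⊢
    by_cases hlO : l ∈ O
    · exact Or.inr hlO
    · have hlx : l ≤ x := le_max' _ l (mem_sdiff.2 ⟨hl, hlO⟩)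
      rcases hy with rfl | hyO
      · exact Or.inl (le_antisymm hlx hyl)
      · exact Or.inr (hO y hyO l hl hyl)

lemma card_filter_isUpperIn_powersetCard (c : ℕ) :
    #{O ∈ Z.powersetCard c | IsUpperIn Z O} = if c ≤ Z.card then 1 else 0 := by
  split_ifs with hc
  · obtain ⟨O, hOZ, hO, hOc⟩ := exists_isUpperIn_card hc
    refine card_eq_one.2 ⟨O, eq_singleton_iff_unique_mem.2 ⟨by simp [hOZ, hO, hOc], ?_⟩⟩
    intro O' hO'
    rw [mem_filter, mem_powersetCard] at hO'
    rcases hO'.2.subset_or_subset hO hO'.1.1 hOZ with h | h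
    · exact eq_of_subset_of_card_le h (by omega)
    · exact (eq_of_subset_of_card_le h (by omega)).symm
  · rw [powersetCard_eq_empty.2 (by omega), filter_empty, card_empty]

lemma ClosedAfterPair.of_card_le_one (hO : O.card ≤ 1) : ClosedAfterPair Z O :=
  fun a ha b hb hab => absurd (card_le_one.1 hO a ha b hb) hab.ne

lemma closedAfterPair_iff_isUpperIn (hO : 2 ≤ O.card) :
    ClosedAfterPair Z O ↔ IsUpperIn Z O := by
  refine ⟨fun h x hx l hl hxl => ?_, fun h a ha b _ _ l hl hal => h a ha l hl hal.le⟩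
  have hne : O.Nonempty := card_pos.1 (by omega)
  obtain ⟨b, hb, hba⟩ := exists_mem_ne (by omega : 1 < O.card) (O.min' hne)
  rcases hxl.eq_or_lt with rfl | hxl
  · exact hx
  · exact h _ (min'_mem O hne) b hb (lt_of_le_of_ne (min'_le O b hb) hba.symm) l hl
      ((min'_le O x hx).trans_lt hxl)

lemma card_filter_closedAfterPair_powersetCard (c : ℕ) :
    #{O ∈ Z.powersetCard c | ClosedAfterPair Z O} =
      if c = 1 then Z.card else if c ≤ Z.card then 1 else 0 := by
  rcases Nat.lt_or_ge c 2 with hc | hc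
  · rw [filter_true_of_mem fun O hO => ClosedAfterPair.of_card_le_one
      ((mem_powersetCard.1 hO).2.trans_le (by omega)), card_powersetCard]
    interval_cases c <;> simp
  · rw [filter_congr fun O hO => closedAfterPair_iff_isUpperIn
      ((mem_powersetCard.1 hO).2.symm ▸ hc), card_filter_isUpperIn_powersetCard,
      if_neg (show c ≠ 1 by omega)]

lemma card_filter_closedAfterPair_card_eq (Z : Finset α) {k : ℕ} (hk : k ≠ 0) :
    #{O ∈ Z.powerset | ClosedAfterPair Z O ∧ k + O.card = Z.card + 1} =
      (if Z.card + 1 = k then 1 else 0) + k * (if Z.card = k then 1 else 0) +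
        (if k < Z.card then 1 else 0) := by
  by_cases hkZ : k ≤ Z.card + 1
  · have hset : {O ∈ Z.powerset | ClosedAfterPair Z O ∧ k + O.card = Z.card + 1} =
        {O ∈ Z.powersetCard (Z.card + 1 - k) | ClosedAfterPair Z O} := by
      ext O
      simp only [mem_filter, mem_powerset, mem_powersetCard]
      exact ⟨fun ⟨hOZ, hO, hc⟩ => ⟨⟨hOZ, by omega⟩, hO⟩,
        fun ⟨⟨hOZ, hc⟩, hO⟩ => ⟨hOZ, hO, by omega⟩⟩
    rw [hset, card_filter_closedAfterPair_powersetCard]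
    split_ifs <;> omega
  · rw [filter_false_of_mem fun O _ h => by omega]
    simp only [card_empty]
    split_ifs <;> omega

end UpperSubsets

def invSeqs (n : ℕ) : Finset (Fin n → ℕ) := Fintype.piFinset fun i => range (i + 1)

def avoiders (n : ℕ) : Finset (Fin n → ℕ) := {e ∈ invSeqs n | NoDropAfterRepeat e}

def zeroSet {n : ℕ} (e : Fin n → ℕ) : Finset (Fin n) := {i | e i = 0}

section Sequences

variable {n m : ℕ}

lemma mem_invSeqs {e : Fin n → ℕ} : e ∈ invSeqs n ↔ InvSeq e := by
  simp [invSeqs, InvSeq]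

lemma mem_avoiders {e : Fin n → ℕ} :
    e ∈ avoiders n ↔ InvSeq e ∧ NoDropAfterRepeat e := by
  rw [avoiders, mem_filter, mem_invSeqs]

lemma z_eq_card (n k : ℕ) : z n k = #{e ∈ avoiders n | zeroStat e = k} := by
  rw [z, ← Nat.card_eq_finsetCard]
  refine Nat.card_congr (Equiv.subtypeEquivRight fun e => ?_)
  rw [mem_filter, mem_avoiders, ← avoids_101_and_avoids_110_iff]
  tauto

@[simp]
lemma mem_zeroSet {e : Fin n → ℕ} {i : Fin n} : i ∈ zeroSet e ↔ e i = 0 := by simp [zeroSet]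

lemma zeroStat_eq_card_zeroSet (e : Fin n → ℕ) : zeroStat e = #(zeroSet e) := rfl

lemma zeroStat_le (e : Fin n → ℕ) : zeroStat e ≤ n :=
  (card_le_univ _).trans_eq (Fintype.card_fin n)

lemma InvSeq.apply_zero {e : Fin (m + 1) → ℕ} (he : InvSeq e) : e 0 = 0 :=
  Nat.le_zero.1 (he 0)

lemma zeroStat_cons_zero (f : Fin m → ℕ) :
    zeroStat (Fin.cons 0 f : Fin (m + 1) → ℕ) = zeroStat f + 1 := by
  simp only [zeroStat, card_filter, Fin.sum_univ_succ, Fin.cons_zero, Fin.cons_succ]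
  simp [add_comm]

lemma NoDropAfterRepeat.cons_zero {f : Fin m → ℕ} (hf : NoDropAfterRepeat f) :
    NoDropAfterRepeat (Fin.cons 0 f : Fin (m + 1) → ℕ) := by
  intro i j l hij hil hej
  cases i using Fin.cases with
  | zero => simp
  | succ i =>
    cases j using Fin.cases with
    | zero => exact absurd hij (Fin.not_lt_zero _)
    | succ j =>
      cases l using Fin.cases with
      | zero => exact absurd hil (Fin.not_lt_zero _)
      | succ l =>
        simp only [Fin.cons_succ] at hej ⊢
        exact hf i j l (Fin.succ_lt_succ_iff.1 hij) (Fin.succ_lt_succ_iff.1 hil) hej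

end Sequences

def shrink {m : ℕ} (e : Fin (m + 1) → ℕ) : Fin m → ℕ := fun i => e i.succ - 1

def onesSet {m : ℕ} (e : Fin (m + 1) → ℕ) : Finset (Fin m) := {i | e i.succ = 1}

def expand {m : ℕ} (y : Fin m → ℕ) (O : Finset (Fin m)) : Fin (m + 1) → ℕ :=
  Fin.cons 0 fun i => if y i = 0 then (if i ∈ O then 1 else 0) else y i + 1

section ShrinkExpand

variable {m : ℕ} {e : Fin (m + 1) → ℕ} {y : Fin m → ℕ} {O : Finset (Fin m)} {i : Fin m}

@[simp]
lemma mem_onesSet : i ∈ onesSet e ↔ e i.succ = 1 := by simp [onesSet]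

lemma invSeq_shrink (he : InvSeq e) : InvSeq (shrink e) := fun i => by
  have := he i.succ
  simp only [Fin.val_succ] at this
  simp only [shrink]
  omega

lemma noDropAfterRepeat_shrink (he : NoDropAfterRepeat e) : NoDropAfterRepeat (shrink e) := by
  intro i j l hij hil hej
  simp only [shrink] at hej ⊢
  have := he i.succ j.succ l.succ (Fin.succ_lt_succ_iff.2 hij) (Fin.succ_lt_succ_iff.2 hil)
  omega

lemma shrink_mem_avoiders (he : e ∈ avoiders (m + 1)) : shrink e ∈ avoiders m := by
  rw [mem_avoiders] at he ⊢
  exact ⟨invSeq_shrink he.1, noDropAfterRepeat_shrink he.2⟩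

lemma onesSet_subset_zeroSet_shrink : onesSet e ⊆ zeroSet (shrink e) := fun i hi => by
  rw [mem_onesSet] at hi
  rw [mem_zeroSet, shrink, hi]

lemma closedAfterPair_onesSet (he : NoDropAfterRepeat e) :
    ClosedAfterPair (zeroSet (shrink e)) (onesSet e) := by
  intro a ha b hb hab l hl hal
  simp only [mem_onesSet, mem_zeroSet, shrink] at ha hb hl ⊢
  have := he a.succ b.succ l.succ (Fin.succ_lt_succ_iff.2 hab) (Fin.succ_lt_succ_iff.2 hal)
    (ha.trans hb.symm)
  omega

lemma expand_shrink (he : InvSeq e) : expand (shrink e) (onesSet e) = e := by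
  conv_rhs => rw [← Fin.cons_self_tail e, he.apply_zero]
  refine congrArg _ (funext fun i => ?_)
  simp only [shrink, mem_onesSet, Fin.tail]
  split_ifs <;> omega

lemma shrink_expand : shrink (expand y O) = y := by
  funext i
  simp only [shrink, expand, Fin.cons_succ]
  split_ifs <;> omega

lemma onesSet_expand (hO : O ⊆ zeroSet y) : onesSet (expand y O) = O := by
  ext i
  have := @hO i
  simp only [mem_onesSet, expand, Fin.cons_succ, mem_zeroSet] at this ⊢
  by_cases hyi : y i = 0 <;> by_cases hi : i ∈ O <;> simp_all

lemma invSeq_expand (hy : InvSeq y) : InvSeq (expand y O) := by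
  intro i
  cases i using Fin.cases with
  | zero => simp [expand]
  | succ i =>
    have := hy i
    simp only [expand, Fin.cons_succ, Fin.val_succ]
    split_ifs <;> omega

lemma noDropAfterRepeat_expand (hy : NoDropAfterRepeat y)
    (hO : ClosedAfterPair (zeroSet y) O) : NoDropAfterRepeat (expand y O) := by
  refine NoDropAfterRepeat.cons_zero fun i j l hij hil hej => ?_
  have hy' := hy i j l hij hil
  split_ifs at hej ⊢
  all_goals first
    | omega
    | exact absurd (hO i ‹_› j ‹_› hij l (mem_zeroSet.2 ‹y l = 0›) hil) ‹l ∉ O›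

lemma zeroStat_expand (hO : O ⊆ zeroSet y) : zeroStat (expand y O) + #O = zeroStat y + 1 := by
  have hzero : zeroSet (fun i => if y i = 0 then (if i ∈ O then 1 else 0) else y i + 1) =
      zeroSet y \ O := by
    ext i
    simp only [mem_zeroSet, mem_sdiff]
    split_ifs <;> simp_all
  rw [expand, zeroStat_cons_zero, zeroStat_eq_card_zeroSet, hzero, card_sdiff_of_subset hO,
    zeroStat_eq_card_zeroSet]
  have := card_le_card hO
  omega

end ShrinkExpand

section Counting

variable {m : ℕ}

lemma card_fiber_shrink {y : Fin m → ℕ} (hy : y ∈ avoiders m) (k : ℕ) :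
    #{e ∈ {e ∈ avoiders (m + 1) | zeroStat e = k} | shrink e = y} =
      #{O ∈ (zeroSet y).powerset |
        ClosedAfterPair (zeroSet y) O ∧ k + #O = #(zeroSet y) + 1} := by
  rw [mem_avoiders] at hy
  refine card_nbij' onesSet (expand y) ?_ ?_ ?_ ?_
  · intro e he
    simp only [coe_filter, mem_avoiders, Set.mem_ofPred_eq, mem_filter] at he ⊢
    obtain ⟨⟨⟨heI, heN⟩, rfl⟩, rfl⟩ := he
    have hcard := zeroStat_expand (onesSet_subset_zeroSet_shrink (e := e))
    rw [expand_shrink heI] at hcard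
    exact ⟨mem_powerset.2 onesSet_subset_zeroSet_shrink, closedAfterPair_onesSet heN, hcard⟩
  · intro O hO
    simp only [coe_filter, mem_avoiders, mem_powerset, Set.mem_ofPred_eq, mem_filter] at hO ⊢
    obtain ⟨hOZ, hO, hk⟩ := hO
    exact ⟨⟨⟨invSeq_expand hy.1, noDropAfterRepeat_expand hy.2 hO⟩,
      by have := zeroStat_expand hOZ; rw [zeroStat_eq_card_zeroSet y] at this; omega⟩,
      shrink_expand⟩
  · intro e he
    simp only [coe_filter, mem_avoiders, Set.mem_ofPred_eq, mem_filter] at he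
    obtain ⟨⟨⟨heI, -⟩, -⟩, rfl⟩ := he
    exact expand_shrink heI
  · intro O hO
    simp only [coe_filter, mem_powerset, Set.mem_ofPred_eq] at hO
    exact onesSet_expand hO.1

lemma z_succ (m : ℕ) {k : ℕ} (hk : k ≠ 0) :
    z (m + 1) k = z m (k - 1) + k * z m k + ∑ j ∈ Icc (k + 1) m, z m j := by
  have hfiber : ∀ y ∈ avoiders m,
      #{e ∈ {e ∈ avoiders (m + 1) | zeroStat e = k} | shrink e = y} =
      (if zeroStat y + 1 = k then 1 else 0) + k * (if zeroStat y = k then 1 else 0) +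
        (if k < zeroStat y then 1 else 0) := fun y hy =>
    (card_fiber_shrink hy k).trans (card_filter_closedAfterPair_card_eq _ hk)
  rw [z_eq_card, card_eq_sum_card_fiberwise fun e he => shrink_mem_avoiders (mem_filter.1 he).1,
    sum_congr rfl hfiber]
  simp only [sum_add_distrib, ← mul_sum, sum_boole, Nat.cast_id]
  have hlarge : #{y ∈ avoiders m | k < zeroStat y} = ∑ j ∈ Icc (k + 1) m, z m j := by
    rw [card_eq_sum_card_fiberwise (s := {y ∈ avoiders m | k < zeroStat y}) fun y hy =>
      mem_Icc.2 ⟨(mem_filter.1 hy).2, zeroStat_le y⟩]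
    refine sum_congr rfl fun j hj => ?_
    rw [z_eq_card, filter_filter]
    exact congrArg card (filter_congr fun y _ => by rw [mem_Icc] at hj; omega)
  rw [hlarge, z_eq_card, z_eq_card]
  congr 3
  exact filter_congr fun y _ => by omega

lemma z_succ_zero (m : ℕ) : z (m + 1) 0 = 0 := by
  rw [z_eq_card, card_eq_zero, filter_eq_empty_iff]
  intro e he
  rw [← Fin.cons_self_tail e, (mem_avoiders.1 he).1.apply_zero, zeroStat_cons_zero]
  omega

lemma z_zero_left (k : ℕ) : z 0 k = if k = 0 then 1 else 0 := by
  rcases eq_or_ne k 0 with rfl | hk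
  · simp [z_eq_card, avoiders, invSeqs, zeroStat, NoDropAfterRepeat]
  · simp [z_eq_card, zeroStat, hk.symm, hk]

lemma z_one (k : ℕ) : z 1 k = if k = 1 then 1 else 0 := by
  rcases eq_or_ne k 0 with rfl | hk
  · exact z_succ_zero 0
  · rw [z_succ 0 hk, Icc_eq_empty_of_lt (by omega), sum_empty, z_zero_left, z_zero_left,
      if_neg hk]
    split_ifs <;> omega

lemma z_eq_T (n k : ℕ) : z (n + 1) k = T (n + 1) k := by
  induction n generalizing k with
  | zero => rw [z_one]; rfl
  | succ n ih =>
    rcases eq_or_ne k 0 with rfl | hk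
    · rw [z_succ_zero]; rfl
    · rw [z_succ _ hk, T, if_neg hk, ih, ih]
      exact congrArg _ (sum_congr rfl fun j _ => ih j)

end Counting

theorem stmt_13 :
    (∀ k : ℕ, z 1 k = if k = 1 then 1 else 0) ∧
    (∀ n k : ℕ, 2 ≤ n → 1 ≤ k → k ≤ n →
      z n k = z (n - 1) (k - 1) + k * z (n - 1) k +
        ∑ j ∈ Finset.Icc (k + 1) (n - 1), z (n - 1) j) ∧
    (∀ n k : ℕ, 1 ≤ n → 1 ≤ k → k ≤ n → z n k = T n k) := by
  refine ⟨z_one, fun n k hn hk _ => ?_, fun n k hn _ _ => ?_⟩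
  · obtain ⟨m, rfl⟩ : ∃ m, n = m + 1 := ⟨n - 1, by omega⟩
    exact z_succ m (by omega)
  · obtain ⟨m, rfl⟩ : ∃ m, n = m + 1 := ⟨n - 1, by omega⟩
    exact z_eq_T m k
end

section
/- For all integers 1 ≤ k ≤ n, the number of inversion sequences e of length n avoiding both patterns 010 and 101 with rep(e) = k equals the Stirling number of the second kind S(n,k), i.e. equals the number of partitions of an n-element set into exactly k nonempty blocks. -/
/-- The Stirling number of the second kind: the number of partitions of an
`n`-element set into exactly `k` nonempty blocks. -/
noncomputable def stirling2 (n k : ℕ) : ℕ :=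
  Nat.card {P : Finpartition (Finset.univ : Finset (Fin n)) // P.parts.card = k}


section Aux
open Finset

def Contig {n : ℕ} (e : Fin n → ℕ) : Prop :=
  ∀ i j l : Fin n, i ≤ j → j ≤ l → e i = e l → e j = e i

theorem avoids_iff_contig {n : ℕ} (e : Fin n → ℕ) :
    (Avoids e [0,1,0] ∧ Avoids e [1,0,1]) ↔ Contig e := by
  constructor
  · rintro ⟨h1, h2⟩ i j l hij hjl hil
    by_contra hne
    rcases eq_or_lt_of_le hij with rfl | hij
    · exact hne rfl
    rcases eq_or_lt_of_le hjl with rfl | hjl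
    · exact hne hil.symm
    rcases lt_or_gt_of_ne hne with hlt | hgt
    · -- e j < e i : pattern 101
      apply h2
      refine ⟨![i, j, l], ?_, ?_⟩
      · intro a b hab
        fin_cases a <;> fin_cases b <;> simp_all <;> omega
      · intro a b
        fin_cases a <;> fin_cases b <;>
          simp [List.get] <;> omega
    · apply h1
      refine ⟨![i, j, l], ?_, ?_⟩
      · intro a b hab
        fin_cases a <;> fin_cases b <;> simp_all <;> omega
      · intro a b
        fin_cases a <;> fin_cases b <;>
          simp [List.get] <;> omega
  · rintro hc
    have l3 : ([0,1,0] : List ℕ).length = 3 := rfl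
    have l3' : ([1,0,1] : List ℕ).length = 3 := rfl
    constructor <;> rintro ⟨s, hs, hcond⟩
    · set a0 : Fin ([0,1,0] : List ℕ).length := ⟨0, by omega⟩
      set a1 : Fin ([0,1,0] : List ℕ).length := ⟨1, by omega⟩
      set a2 : Fin ([0,1,0] : List ℕ).length := ⟨2, by omega⟩
      have e01 : e (s a0) < e (s a1) := ((hcond a0 a1).1).mp (by simp [a0, a1, a2])
      have e02 : e (s a0) = e (s a2) := ((hcond a0 a2).2).mp (by simp [a0, a1, a2])
      have hs01 : s a0 < s a1 := hs (by simp [a0, a1, Fin.lt_def])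
      have hs12 : s a1 < s a2 := hs (by simp [a1, a2, Fin.lt_def])
      have := hc (s a0) (s a1) (s a2) hs01.le hs12.le e02
      omega
    · set a0 : Fin ([1,0,1] : List ℕ).length := ⟨0, by omega⟩
      set a1 : Fin ([1,0,1] : List ℕ).length := ⟨1, by omega⟩
      set a2 : Fin ([1,0,1] : List ℕ).length := ⟨2, by omega⟩
      have e10 : e (s a1) < e (s a0) := ((hcond a1 a0).1).mp (by simp [a0, a1, a2])
      have e02 : e (s a0) = e (s a2) := ((hcond a0 a2).2).mp (by simp [a0, a1, a2])
      have hs01 : s a0 < s a1 := hs (by simp [a0, a1, Fin.lt_def])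
      have hs12 : s a1 < s a2 := hs (by simp [a1, a2, Fin.lt_def])
      have := hc (s a0) (s a1) (s a2) hs01.le hs12.le e02
      omega

def SEQ (n k : ℕ) :=
  {e : Fin n → ℕ // (∀ i : Fin n, e i ≤ (i:ℕ)) ∧ Contig e ∧ distStat e + k = n}

instance (n k : ℕ) : Finite (SEQ n k) := by
  apply Finite.of_injective (fun (e : SEQ n k) => (fun i => (⟨e.1 i, by
    have := e.2.1 i; have := i.is_lt; omega⟩ : Fin (n+1)) : Fin n → Fin (n+1)))
  intro a b hab
  apply Subtype.ext; funext i
  have := congrFun hab i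
  simpa [Fin.ext_iff] using this

lemma card_split {α : Type*} (P Q : α → Prop) [Finite {x // P x}] :
    Nat.card {x // P x} =
      Nat.card {x // P x ∧ Q x} + Nat.card {x // P x ∧ ¬Q x} := by
  classical
  haveI : Finite {x // P x ∧ Q x} :=
    Finite.of_injective (fun y => (⟨y.1, y.2.1⟩ : {x // P x}))
      (fun a b h => Subtype.ext (congrArg Subtype.val h :))
  haveI : Finite {x // P x ∧ ¬Q x} :=
    Finite.of_injective (fun y => (⟨y.1, y.2.1⟩ : {x // P x}))
      (fun a b h => Subtype.ext (congrArg Subtype.val h :))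
  have e : {x // P x} ≃ {x // P x ∧ Q x} ⊕ {x // P x ∧ ¬Q x} :=
    (Equiv.sumCompl (fun y : {x // P x} => Q y.1)).symm.trans
      (Equiv.sumCongr
        ((Equiv.subtypeSubtypeEquivSubtypeInter P Q))
        ((Equiv.subtypeSubtypeEquivSubtypeInter P (fun x => ¬ Q x))))
  rw [Nat.card_congr e, Nat.card_sum]

namespace SeqRec
variable {m n : ℕ}

lemma image_split {β : Type*} [DecidableEq β] (f : Fin (n+1) → β) :
    Finset.univ.image f
      = insert (f (Fin.last n)) (Finset.univ.image (Fin.init f)) := by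
  ext v
  simp only [mem_image, mem_insert, mem_univ, true_and, Fin.init]
  constructor
  · rintro ⟨j, rfl⟩
    induction j using Fin.lastCases with
    | last => exact Or.inl rfl
    | cast i => exact Or.inr ⟨i, rfl⟩
  · rintro (rfl | ⟨i, rfl⟩)
    · exact ⟨Fin.last n, rfl⟩
    · exact ⟨i.castSucc, rfl⟩

lemma contig_init {e : Fin (n+1) → ℕ} (he : Contig e) : Contig (Fin.init e) := by
  intro i j l hij hjl heq
  exact he i.castSucc j.castSucc l.castSucc (by simpa using hij) (by simpa using hjl) heq

lemma le_init {e : Fin (n+1) → ℕ} (he : ∀ i : Fin (n+1), e i ≤ (i:ℕ)) :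
    ∀ i : Fin n, Fin.init e i ≤ (i:ℕ) := by
  intro i
  have := he i.castSucc
  simpa [Fin.init] using this

lemma zero_mem_image (e : Fin (n+1) → ℕ) (he : ∀ i : Fin (n+1), e i ≤ (i:ℕ)) :
    (0:ℕ) ∈ Finset.univ.image e := by
  have h0 := he 0
  simp only [Fin.val_zero, Nat.le_zero] at h0
  exact mem_image.mpr ⟨0, mem_univ _, h0⟩

lemma card_image_eq_distStat_succ (e : Fin (n+1) → ℕ) (he : ∀ i : Fin (n+1), e i ≤ (i:ℕ)) :
    (Finset.univ.image e).card = distStat e + 1 := by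
  classical
  have hsplit := Finset.card_filter_add_card_filter_not
    (s := Finset.univ.image e) (p := fun v => 0 < v)
  have hzero : (Finset.univ.image e).filter (fun v => ¬ 0 < v) = {0} := by
    ext v
    simp only [mem_filter, Nat.not_lt, Nat.le_zero, mem_singleton]
    constructor
    · rintro ⟨-, rfl⟩; rfl
    · rintro rfl; exact ⟨zero_mem_image e he, rfl⟩
  rw [hzero] at hsplit
  simp only [card_singleton] at hsplit
  unfold distStat
  omega

lemma distStat_le (e : Fin (n+1) → ℕ) (he : ∀ i : Fin (n+1), e i ≤ (i:ℕ)) :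
    distStat e ≤ n := by
  have h1 := card_image_eq_distStat_succ e he
  have h2 : (Finset.univ.image e).card ≤ (Finset.univ : Finset (Fin (n+1))).card :=
    Finset.card_image_le
  simp only [card_univ, Fintype.card_fin] at h2
  omega

/-- contiguity is preserved when repeating the last value -/
lemma contig_snoc_repeat {g : Fin (n+1) → ℕ} (hg : Contig g) :
    Contig (Fin.snoc g (g (Fin.last n)) : Fin (n+2) → ℕ) := by
  intro i j l hij hjl heq
  set e : Fin (n+2) → ℕ := Fin.snoc g (g (Fin.last n)) with hedef
  have hval : ∀ x : Fin (n+2), ∃ x' : Fin (n+1),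
      e x = g x' ∧ (x' : ℕ) = min (x : ℕ) n := by
    intro x
    induction x using Fin.lastCases with
    | last =>
      refine ⟨Fin.last n, by simp [hedef], ?_⟩
      simp [Fin.last]
    | cast y =>
      refine ⟨y, by simp [hedef], ?_⟩
      have := y.is_lt
      simp [Fin.le_def]
      omega
  obtain ⟨i', hi1, hi2⟩ := hval i
  obtain ⟨j', hj1, hj2⟩ := hval j
  obtain ⟨l', hl1, hl2⟩ := hval l
  rw [hj1, hi1]
  rw [hi1, hl1] at heq
  apply hg i' j' l'
  · rw [Fin.le_def] at hij ⊢; omega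
  · rw [Fin.le_def] at hjl ⊢; omega
  · exact heq

/-- contiguity is preserved when appending a brand new value -/
lemma contig_snoc_new {g : Fin (n+1) → ℕ} (hg : Contig g) {x : ℕ}
    (hx : ∀ i, g i ≠ x) :
    Contig (Fin.snoc g x : Fin (n+2) → ℕ) := by
  intro i j l hij hjl heq
  induction l using Fin.lastCases with
  | last =>
    simp only [Fin.snoc_last] at heq
    induction i using Fin.lastCases with
    | last =>
      -- i = last, so j = last as well
      have : j = Fin.last (n+1) := le_antisymm hjl (by rw [Fin.le_def] at hij ⊢; omega)
      rw [this]
    | cast i' =>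
      rw [Fin.snoc_castSucc] at heq
      exact absurd heq (hx i')
  | cast l' =>
    have hjne : j ≠ Fin.last (n+1) := by
      intro h
      rw [h, Fin.le_def] at hjl
      have := l'.is_lt
      simp [Fin.last] at hjl
      omega
    have hine : i ≠ Fin.last (n+1) := by
      intro h
      rw [h, Fin.le_def] at hij
      have hj := j.is_lt
      rcases Fin.exists_castSucc_eq.mpr hjne with ⟨j', rfl⟩
      simp [Fin.last] at hij
      have := j'.is_lt
      omega
    rcases Fin.exists_castSucc_eq.mpr hjne with ⟨j', rfl⟩
    rcases Fin.exists_castSucc_eq.mpr hine with ⟨i', rfl⟩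
    simp only [Fin.snoc_castSucc] at heq ⊢
    apply hg i' j' l' (by simpa using hij) (by simpa using hjl) heq

end SeqRec
-- continuation: case equivs (to be appended into seqrec namespace)
namespace SeqRec

lemma distStat_insert_mem {e : Fin (n+2) → ℕ}
    (h : Finset.univ.image e = Finset.univ.image (Fin.init e)) :
    distStat e = distStat (Fin.init e) := by unfold distStat; rw [h]

/-- Case A equivalence -/
noncomputable def caseAEquiv (n k : ℕ) :
    {e : Fin (n+2) → ℕ //
      ((∀ i : Fin (n+2), e i ≤ (i:ℕ)) ∧ Contig e ∧ distStat e + (k+1) = n+2)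
        ∧ e (Fin.last (n+1)) = e ((Fin.last n).castSucc)}
      ≃ SEQ (n+1) k where
  toFun := fun ⟨e, ⟨hle, hc, hd⟩, hQ⟩ =>
    ⟨Fin.init e, le_init hle, contig_init hc, by
      have himg := image_split e
      have hmem : e (Fin.last (n+1)) ∈ Finset.univ.image (Fin.init e) := by
        rw [hQ]
        exact mem_image.mpr ⟨Fin.last n, mem_univ _, rfl⟩
      rw [Finset.insert_eq_self.mpr hmem] at himg
      have : distStat e = distStat (Fin.init e) := by unfold distStat; rw [himg]
      omega⟩
  invFun := fun ⟨g, hgle, hgc, hgd⟩ =>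
    ⟨Fin.snoc g (g (Fin.last n)),
      ⟨by
        intro i
        induction i using Fin.lastCases with
        | last =>
          rw [Fin.snoc_last]
          have := hgle (Fin.last n)
          simp [Fin.last] at this ⊢
          omega
        | cast i' =>
          rw [Fin.snoc_castSucc]
          have := hgle i'
          simpa using this,
       contig_snoc_repeat hgc, by
        have himg := image_split (Fin.snoc g (g (Fin.last n)) : Fin (n+2) → ℕ)
        rw [Fin.init_snoc, Fin.snoc_last] at himg
        have hmem : g (Fin.last n) ∈ Finset.univ.image g :=
          mem_image.mpr ⟨Fin.last n, mem_univ _, rfl⟩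
        rw [Finset.insert_eq_self.mpr hmem] at himg
        have : distStat (Fin.snoc g (g (Fin.last n)) : Fin (n+2) → ℕ) = distStat g := by
          unfold distStat; rw [himg]
        omega⟩,
      by rw [Fin.snoc_last, Fin.snoc_castSucc]⟩
  left_inv := by
    rintro ⟨e, ⟨hle, hc, hd⟩, hQ⟩
    apply Subtype.ext
    show Fin.snoc (Fin.init e) (Fin.init e (Fin.last n)) = e
    have : Fin.init e (Fin.last n) = e (Fin.last (n+1)) := hQ.symm
    rw [this, Fin.snoc_init_self]
  right_inv := by
    rintro ⟨g, hgle, hgc, hgd⟩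
    apply Subtype.ext
    show Fin.init (Fin.snoc g (g (Fin.last n)) : Fin (n+2) → ℕ) = g
    exact Fin.init_snoc _ _

/-- allowed new values -/
def allowed (g : Fin (n+1) → ℕ) : Finset ℕ :=
  (Finset.range (n+2)) \ (Finset.univ.image g)

lemma card_allowed (g : Fin (n+1) → ℕ) (hgle : ∀ i : Fin (n+1), g i ≤ (i:ℕ))
    {k : ℕ} (hgd : distStat g + (k+1) = n+1) : (allowed g).card = k + 1 := by
  have hsub : Finset.univ.image g ⊆ Finset.range (n+2) := by
    intro v hv
    obtain ⟨i, -, rfl⟩ := mem_image.mp hv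
    have h1 := hgle i
    have h2 := i.is_lt
    rw [mem_range]
    omega
  rw [allowed, Finset.card_sdiff_of_subset hsub, Finset.card_range,
    card_image_eq_distStat_succ g hgle]
  omega

/-- Case B equivalence -/
noncomputable def caseBEquiv (n k : ℕ) :
    {e : Fin (n+2) → ℕ //
      ((∀ i : Fin (n+2), e i ≤ (i:ℕ)) ∧ Contig e ∧ distStat e + (k+1) = n+2)
        ∧ ¬ e (Fin.last (n+1)) = e ((Fin.last n).castSucc)}
      ≃ Σ g : SEQ (n+1) (k+1), {x : ℕ // x ∈ allowed g.1} where
  toFun := fun ⟨e, ⟨hle, hc, hd⟩, hQ⟩ =>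
    have hnotmem : e (Fin.last (n+1)) ∉ Finset.univ.image (Fin.init e) := by
      intro hmem
      obtain ⟨i', -, hi'⟩ := mem_image.mp hmem
      have hi2 : e i'.castSucc = e (Fin.last (n+1)) := hi'
      have hcontig := hc i'.castSucc ((Fin.last n).castSucc) (Fin.last (n+1))
        (by rw [Fin.le_def]; simp [Fin.last]; omega)
        (by rw [Fin.le_def]; simp [Fin.last])
        hi2
      rw [hi2] at hcontig
      exact hQ hcontig.symm
    have hpos : 0 < e (Fin.last (n+1)) := by
      rcases Nat.eq_zero_or_pos (e (Fin.last (n+1))) with h | h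
      · exfalso
        apply hnotmem
        have h0 : Fin.init e 0 = 0 := by
          have := hle ((0 : Fin (n+1)).castSucc)
          simp [Fin.init] at this ⊢
          simpa using this
        rw [h]
        exact mem_image.mpr ⟨0, mem_univ _, h0⟩
      · exact h
    have hdinit : distStat e = distStat (Fin.init e) + 1 := by
      have himg := image_split e
      unfold distStat
      rw [himg, Finset.filter_insert, if_pos hpos,
        Finset.card_insert_of_notMem (fun hmem => hnotmem (Finset.filter_subset _ _ hmem))]
    ⟨⟨Fin.init e, le_init hle, contig_init hc, by omega⟩,
      e (Fin.last (n+1)), by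
        rw [allowed, Finset.mem_sdiff, Finset.mem_range]
        constructor
        · have h5 := hle (Fin.last (n+1))
          rw [Fin.val_last] at h5
          omega
        · exact hnotmem⟩
  invFun := fun ⟨⟨g, hgle, hgc, hgd⟩, x, hx⟩ =>
    have hxr : x < n + 2 := by
      have := (Finset.mem_sdiff.mp hx).1
      simpa [Finset.mem_range] using this
    have hxn : x ∉ Finset.univ.image g := (Finset.mem_sdiff.mp hx).2
    have hxne : ∀ i, g i ≠ x := by
      intro i h
      exact hxn (mem_image.mpr ⟨i, mem_univ _, h⟩)
    have hxpos : 0 < x := by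
      rcases Nat.eq_zero_or_pos x with h | h
      · exfalso
        apply hxn
        have h0 : g 0 = 0 := by
          have := hgle 0
          simpa using this
        rw [h]
        exact mem_image.mpr ⟨0, mem_univ _, h0⟩
      · exact h
    ⟨Fin.snoc g x,
      ⟨by
        intro i
        induction i using Fin.lastCases with
        | last =>
          rw [Fin.snoc_last, Fin.val_last]
          omega
        | cast i' =>
          rw [Fin.snoc_castSucc]
          have := hgle i'
          simpa using this,
       contig_snoc_new hgc hxne, by
        have himg := image_split (Fin.snoc g x : Fin (n+2) → ℕ)
        rw [Fin.init_snoc, Fin.snoc_last] at himg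
        have : distStat (Fin.snoc g x : Fin (n+2) → ℕ) = distStat g + 1 := by
          unfold distStat
          rw [himg, Finset.filter_insert, if_pos hxpos,
            Finset.card_insert_of_notMem (fun hmem => hxn (Finset.filter_subset _ _ hmem))]
        omega⟩,
      by
        rw [Fin.snoc_last, Fin.snoc_castSucc]
        intro h
        exact hxne (Fin.last n) h.symm⟩
  left_inv := by
    rintro ⟨e, ⟨hle, hc, hd⟩, hQ⟩
    apply Subtype.ext
    exact Fin.snoc_init_self e
  right_inv := by
    rintro ⟨⟨g, hgle, hgc, hgd⟩, x, hx⟩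
    apply Sigma.subtype_ext
    · apply Subtype.ext
      show Fin.init (Fin.snoc g x : Fin (n+2) → ℕ) = g
      exact Fin.init_snoc _ _
    · show (Fin.snoc g x : Fin (n+2) → ℕ) (Fin.last (n+1)) = x
      exact Fin.snoc_last _ _

set_option maxHeartbeats 1000000 in
lemma seq_rec (n k : ℕ) :
    Nat.card (SEQ (n+2) (k+1))
      = Nat.card (SEQ (n+1) k) + (k+1) * Nat.card (SEQ (n+1) (k+1)) := by
  classical
  haveI : Finite {e : Fin (n+2) → ℕ //
      (∀ i : Fin (n+2), e i ≤ (i:ℕ)) ∧ Contig e ∧ distStat e + (k+1) = n+2} :=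
    (inferInstance : Finite (SEQ (n+2) (k+1)))
  have hsplit := card_split
    (fun e : Fin (n+2) → ℕ =>
      (∀ i : Fin (n+2), e i ≤ (i:ℕ)) ∧ Contig e ∧ distStat e + (k+1) = n+2)
    (fun e => e (Fin.last (n+1)) = e ((Fin.last n).castSucc))
  have h1 : Nat.card (SEQ (n+2) (k+1))
      = Nat.card {e : Fin (n+2) → ℕ //
      (∀ i : Fin (n+2), e i ≤ (i:ℕ)) ∧ Contig e ∧ distStat e + (k+1) = n+2} := rfl
  rw [h1, hsplit]
  rw [Nat.card_congr (caseAEquiv n k)]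
  rw [Nat.card_congr (caseBEquiv n k)]
  congr 1
  have e2a : (Σ g : SEQ (n+1) (k+1), {x : ℕ // x ∈ allowed g.1})
      ≃ (Σ _g : SEQ (n+1) (k+1), Fin (k+1)) :=
    Equiv.sigmaCongrRight (fun g =>
      Finset.equivFinOfCardEq (card_allowed g.1 g.2.1 g.2.2.2))
  have e2 : (Σ g : SEQ (n+1) (k+1), {x : ℕ // x ∈ allowed g.1})
      ≃ SEQ (n+1) (k+1) × Fin (k+1) :=
    e2a.trans (Equiv.sigmaEquivProd _ _)
  rw [Nat.card_congr e2, Nat.card_prod, Nat.card_eq_fintype_card (α := Fin (k+1)),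
    Fintype.card_fin, Nat.mul_comm]

lemma seq_zero (n : ℕ) : Nat.card (SEQ (n+1) 0) = 0 := by
  have : IsEmpty (SEQ (n+1) 0) := by
    constructor
    rintro ⟨e, hle, -, hd⟩
    have := distStat_le e hle
    omega
  exact Nat.card_of_isEmpty

end SeqRec

def PAR (n k : ℕ) :=
  {f : Fin n → Fin n // (∀ i, f (f i) = f i) ∧ (∀ i, f i ≤ i) ∧
    (Finset.univ.image f).card = k}

instance (n k : ℕ) : Finite (PAR n k) := by unfold PAR; infer_instance

namespace ParRec
variable {n : ℕ}

/-- restriction of f to Fin n -/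
def res (f : Fin (n+1) → Fin (n+1)) (hle : ∀ i, f i ≤ i) (i : Fin n) : Fin n :=
  Fin.castLT (f i.castSucc) (by
    have h : (f i.castSucc : ℕ) ≤ ((i.castSucc : Fin (n+1)) : ℕ) := hle i.castSucc
    simp at h
    omega)

lemma castSucc_res (f : Fin (n+1) → Fin (n+1)) (hle : ∀ i, f i ≤ i) (i : Fin n) :
    (res f hle i).castSucc = f i.castSucc := by
  simp [res]

lemma image_comp_castSucc (f : Fin (n+1) → Fin (n+1)) (hle : ∀ i, f i ≤ i) :
    Finset.univ.image (fun i : Fin n => f i.castSucc)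
      = (Finset.univ.image (res f hle)).image Fin.castSucc := by
  rw [Finset.image_image]
  apply Finset.image_congr
  intro i _
  exact (castSucc_res f hle i).symm

lemma image_split {β : Type*} [DecidableEq β] (f : Fin (n+1) → β) :
    Finset.univ.image f
      = insert (f (Fin.last n)) (Finset.univ.image (fun i : Fin n => f i.castSucc)) := by
  ext v
  simp only [mem_image, mem_insert, mem_univ, true_and]
  constructor
  · rintro ⟨j, rfl⟩
    induction j using Fin.lastCases with
    | last => exact Or.inl rfl
    | cast i => exact Or.inr ⟨i, rfl⟩
  · rintro (rfl | ⟨i, rfl⟩)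
    · exact ⟨Fin.last n, rfl⟩
    · exact ⟨i.castSucc, rfl⟩

lemma res_idem (f : Fin (n+1) → Fin (n+1)) (hidem : ∀ i, f (f i) = f i)
    (hle : ∀ i, f i ≤ i) : ∀ i, res f hle (res f hle i) = res f hle i := by
  intro i
  apply Fin.castSucc_injective
  rw [castSucc_res, castSucc_res]
  exact hidem _

lemma res_le (f : Fin (n+1) → Fin (n+1)) (hle : ∀ i, f i ≤ i) :
    ∀ i, res f hle i ≤ i := by
  intro i
  have h : (f i.castSucc : ℕ) ≤ ((i.castSucc : Fin (n+1)) : ℕ) := hle i.castSucc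
  simp only [Fin.le_def]
  simpa [res] using h

lemma card_image_res (f : Fin (n+1) → Fin (n+1)) (hle : ∀ i, f i ≤ i) :
    (Finset.univ.image (res f hle)).card
      = (Finset.univ.image (fun i : Fin n => f i.castSucc)).card := by
  rw [image_comp_castSucc f hle, Finset.card_image_of_injective _ (Fin.castSucc_injective n)]

/-- extension of g -/
def ext (g : Fin n → Fin n) (v : Fin (n+1)) : Fin (n+1) → Fin (n+1) :=
  Fin.snoc (fun i => (g i).castSucc) v

lemma ext_castSucc (g : Fin n → Fin n) (v : Fin (n+1)) (i : Fin n) :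
    ext g v i.castSucc = (g i).castSucc := by simp [ext]

lemma ext_last (g : Fin n → Fin n) (v : Fin (n+1)) :
    ext g v (Fin.last n) = v := by simp [ext]

lemma res_ext (g : Fin n → Fin n) (v : Fin (n+1)) (hle : ∀ i, ext g v i ≤ i) :
    res (ext g v) hle = g := by
  funext i
  apply Fin.castSucc_injective
  rw [castSucc_res, ext_castSucc]

lemma res_ext' (g : Fin n → Fin n) (v : Fin (n+1)) {hle : ∀ i, ext g v i ≤ i} :
    res (ext g v) hle = g := by
  funext i
  apply Fin.castSucc_injective
  rw [castSucc_res, ext_castSucc]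

lemma ext_res (f : Fin (n+1) → Fin (n+1)) (hle : ∀ i, f i ≤ i) :
    ext (res f hle) (f (Fin.last n)) = f := by
  funext j
  induction j using Fin.lastCases with
  | last => rw [ext_last]
  | cast i => rw [ext_castSucc, castSucc_res]

lemma fix_of_mem_image {g : Fin n → Fin n} (hg : ∀ i, g (g i) = g i)
    {v : Fin n} (hv : v ∈ Finset.univ.image g) : g v = v := by
  obtain ⟨j, -, rfl⟩ := mem_image.mp hv
  exact hg j

lemma image_ext (g : Fin n → Fin n) (v : Fin (n+1)) :
    Finset.univ.image (ext g v)
      = insert v ((Finset.univ.image g).image Fin.castSucc) := by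
  rw [image_split, ext_last, Finset.image_image]
  congr 1
  apply Finset.image_congr
  intro i _
  exact ext_castSucc g _ i

lemma ext_idem {g : Fin n → Fin n} (hg : ∀ i, g (g i) = g i) {v : Fin n}
    (hv : v ∈ Finset.univ.image g) :
    ∀ j, ext g v.castSucc (ext g v.castSucc j) = ext g v.castSucc j := by
  intro j
  induction j using Fin.lastCases with
  | last => rw [ext_last, ext_castSucc, fix_of_mem_image hg hv]
  | cast i => rw [ext_castSucc, ext_castSucc, hg]

lemma ext_le (g : Fin n → Fin n) (hle : ∀ i, g i ≤ i) (v : Fin (n+1)) :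
    ∀ j, ext g v j ≤ j := by
  intro j
  induction j using Fin.lastCases with
  | last => rw [ext_last]; exact Fin.le_last v
  | cast i =>
    rw [ext_castSucc]
    have := hle i
    simp only [Fin.le_def] at *
    simpa using this

/-- Case A : f (last) = last -/
noncomputable def caseAEquiv (n k : ℕ) :
    {f : Fin (n+1) → Fin (n+1) //
        ((∀ i, f (f i) = f i) ∧ (∀ i, f i ≤ i) ∧ (Finset.univ.image f).card = k + 1)
          ∧ f (Fin.last n) = Fin.last n}
      ≃ PAR n k where
  toFun := fun ⟨f, ⟨h1, h2, hcard⟩, hlast⟩ =>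
    ⟨res f h2, res_idem f h1 h2, res_le f h2, by
      have himg := image_split f
      rw [hlast] at himg
      have hnotmem : Fin.last n ∉ Finset.univ.image (fun i : Fin n => f i.castSucc) := by
        simp only [mem_image, not_exists]
        rintro x ⟨-, hx⟩
        have h4 : (f x.castSucc : ℕ) ≤ ((x.castSucc : Fin (n+1)) : ℕ) := h2 x.castSucc
        rw [hx] at h4
        simp [Fin.last] at h4
        omega
      rw [himg, Finset.card_insert_of_notMem hnotmem] at hcard
      rw [card_image_res]
      omega⟩
  invFun := fun ⟨g, hg1, hg2, hcard⟩ =>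
    ⟨ext g (Fin.last n),
      ⟨by
        intro j
        induction j using Fin.lastCases with
        | last => rw [ext_last, ext_last]
        | cast i => rw [ext_castSucc, ext_castSucc, hg1],
       by
        intro j
        induction j using Fin.lastCases with
        | last => rw [ext_last]
        | cast i =>
          rw [ext_castSucc]
          have := hg2 i
          simp only [Fin.le_def] at *
          simpa using this,
       by
        rw [image_ext, Finset.card_insert_of_notMem, Finset.card_image_of_injective _
          (Fin.castSucc_injective n), hcard]
        simp only [mem_image, not_exists]
        rintro x ⟨-, hx⟩
        exact (Fin.castSucc_lt_last x).ne hx⟩,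
      ext_last g _⟩
  left_inv := by
    rintro ⟨f, ⟨h1, h2, hcard⟩, hlast⟩
    apply Subtype.ext
    show ext (res f h2) (Fin.last n) = f
    rw [← hlast]
    exact ext_res f h2
  right_inv := by
    rintro ⟨g, hg1, hg2, hcard⟩
    apply Subtype.ext
    exact res_ext' g (Fin.last n) (hle := ext_le g hg2 _)

/-- Case B : f (last) ≠ last -/
noncomputable def caseBEquiv (n k : ℕ) :
    {f : Fin (n+1) → Fin (n+1) //
        ((∀ i, f (f i) = f i) ∧ (∀ i, f i ≤ i) ∧ (Finset.univ.image f).card = k + 1)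
          ∧ ¬ f (Fin.last n) = Fin.last n}
      ≃ Σ g : PAR n (k+1), {v : Fin n // v ∈ Finset.univ.image g.1} where
  toFun := fun ⟨f, ⟨h1, h2, hcard⟩, hlast⟩ =>
    have hlt : (f (Fin.last n) : ℕ) < n := by
      have ha : (f (Fin.last n) : ℕ) ≤ ((Fin.last n : Fin (n+1)) : ℕ) := h2 (Fin.last n)
      simp [Fin.last] at ha
      rcases lt_or_eq_of_le ha with h | h
      · exact h
      · exact absurd (Fin.ext (by simpa [Fin.last] using h)) hlast
    have hcastv : (Fin.castLT (f (Fin.last n)) hlt).castSucc = f (Fin.last n) := by simp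
    have hresv : res f h2 (Fin.castLT (f (Fin.last n)) hlt)
        = Fin.castLT (f (Fin.last n)) hlt := by
      apply Fin.castSucc_injective
      rw [castSucc_res, hcastv, h1]
    have hvmem : Fin.castLT (f (Fin.last n)) hlt ∈ Finset.univ.image (res f h2) :=
      mem_image.mpr ⟨_, mem_univ _, hresv⟩
    have hcard' : (Finset.univ.image (res f h2)).card = k + 1 := by
      have hmemimg : f (Fin.last n)
          ∈ Finset.univ.image (fun i : Fin n => f i.castSucc) := by
        refine mem_image.mpr ⟨Fin.castLT (f (Fin.last n)) hlt, mem_univ _, ?_⟩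
        rw [hcastv, h1]
      have himg := image_split f
      rw [Finset.insert_eq_self.mpr hmemimg] at himg
      rw [card_image_res, ← himg, hcard]
    ⟨⟨res f h2, res_idem f h1 h2, res_le f h2, hcard'⟩,
      Fin.castLT (f (Fin.last n)) hlt, hvmem⟩
  invFun := fun ⟨⟨g, hg1, hg2, hcard⟩, v, hv⟩ =>
    ⟨ext g v.castSucc,
      ⟨ext_idem hg1 hv, ext_le g hg2 v.castSucc, by
        rw [image_ext, Finset.insert_eq_self.mpr, Finset.card_image_of_injective _
          (Fin.castSucc_injective n), hcard]
        exact mem_image.mpr ⟨v, hv, rfl⟩⟩,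
      by rw [ext_last]; exact (Fin.castSucc_lt_last v).ne⟩
  left_inv := by
    rintro ⟨f, ⟨h1, h2, hcard⟩, hlast⟩
    apply Subtype.ext
    show ext (res f h2) (Fin.castLT (f (Fin.last n)) _).castSucc = f
    rw [(by simp : (Fin.castLT (f (Fin.last n)) _ : Fin n).castSucc = f (Fin.last n))]
    exact ext_res f h2
  right_inv := by
    rintro ⟨⟨g, hg1, hg2, hcard⟩, v, hv⟩
    apply Sigma.subtype_ext
    · apply Subtype.ext
      exact res_ext' g v.castSucc (hle := ext_le g hg2 _)
    · show Fin.castLT (ext g v.castSucc (Fin.last n)) _ = v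
      apply Fin.castSucc_injective
      simp [ext_last]

lemma par_rec (n k : ℕ) :
    Nat.card (PAR (n+1) (k+1))
      = Nat.card (PAR n k) + (k+1) * Nat.card (PAR n (k+1)) := by
  classical
  have hsplit := card_split
    (fun f : Fin (n+1) → Fin (n+1) =>
      (∀ i, f (f i) = f i) ∧ (∀ i, f i ≤ i) ∧ (Finset.univ.image f).card = k + 1)
    (fun f => f (Fin.last n) = Fin.last n)
  have h1 : Nat.card (PAR (n+1) (k+1))
      = Nat.card {f : Fin (n+1) → Fin (n+1) //
      (∀ i, f (f i) = f i) ∧ (∀ i, f i ≤ i) ∧ (Finset.univ.image f).card = k + 1} := rfl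
  rw [h1, hsplit, Nat.card_congr (caseAEquiv n k), Nat.card_congr (caseBEquiv n k)]
  congr 1
  have e2 : (Σ g : PAR n (k+1), {v : Fin n // v ∈ Finset.univ.image g.1})
      ≃ PAR n (k+1) × Fin (k+1) :=
    (Equiv.sigmaCongrRight (fun g => Finset.equivFinOfCardEq g.2.2.2)).trans
      (Equiv.sigmaEquivProd _ _)
  rw [Nat.card_congr e2, Nat.card_prod, Nat.card_eq_fintype_card (α := Fin (k+1)),
    Fintype.card_fin, Nat.mul_comm]

lemma par_zero (n : ℕ) : Nat.card (PAR (n+1) 0) = 0 := by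
  have : IsEmpty (PAR (n+1) 0) := by
    constructor
    rintro ⟨f, -, -, hcard⟩
    have : f 0 ∈ Finset.univ.image f := mem_image_of_mem f (mem_univ _)
    rw [Finset.card_eq_zero.mp hcard] at this
    exact absurd this (notMem_empty _)
  exact Nat.card_of_isEmpty

end ParRec

namespace ParEquiv

variable {n : ℕ}

/-- blocks of f -/
def blk (f : Fin n → Fin n) (v : Fin n) : Finset (Fin n) :=
  Finset.univ.filter (fun j => f j = v)

lemma fix_of_mem_image {f : Fin n → Fin n} (hf : ∀ i, f (f i) = f i)
    {v : Fin n} (hv : v ∈ Finset.univ.image f) : f v = v := by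
  obtain ⟨j, -, rfl⟩ := mem_image.mp hv
  exact hf j

/-- The Finpartition associated to a min-pointer function. -/
def toPart (f : Fin n → Fin n) (hf : ∀ i, f (f i) = f i) :
    Finpartition (Finset.univ : Finset (Fin n)) where
  parts := (Finset.univ.image f).image (blk f)
  supIndep := by
    rw [Finset.supIndep_iff_pairwiseDisjoint]
    intro s hs t ht hst
    simp only [coe_image, Set.mem_image] at hs ht
    obtain ⟨v, -, rfl⟩ := hs
    obtain ⟨w, -, rfl⟩ := ht
    simp only [Function.onFun, id_eq]
    rw [Finset.disjoint_left]
    intro a ha hb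
    simp only [blk, mem_filter] at ha hb
    exact hst (by rw [← ha.2, ← hb.2])
  sup_parts := by
    apply le_antisymm (Finset.sup_le fun t _ => le_top)
    intro i _
    rw [Finset.mem_sup]
    exact ⟨blk f (f i), mem_image_of_mem _ (mem_image_of_mem f (mem_univ i)),
      by simp [blk]⟩
  bot_notMem := by
    simp only [bot_eq_empty, mem_image]
    rintro ⟨v, hv, hbv⟩
    obtain ⟨j, -, rfl⟩ := hv
    have : f j ∈ blk f (f j) := by
      simp [blk, hf]
    rw [hbv] at this
    exact absurd this (notMem_empty _)

lemma blk_injOn {f : Fin n → Fin n} (hf : ∀ i, f (f i) = f i) :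
    Set.InjOn (blk f) (Finset.univ.image f) := by
  intro v hv w hw hvw
  have hv' : v ∈ blk f v := by simp [blk, fix_of_mem_image hf (by simpa using hv)]
  rw [hvw] at hv'
  simp only [blk, mem_filter] at hv'
  rw [← hv'.2, fix_of_mem_image hf (by simpa using hv)]

lemma toPart_card (f : Fin n → Fin n) (hf : ∀ i, f (f i) = f i) :
    (toPart f hf).parts.card = (Finset.univ.image f).card :=
  Finset.card_image_of_injOn (blk_injOn hf)

/-- the min-pointer function of a partition -/
def toFun (P : Finpartition (Finset.univ : Finset (Fin n))) (i : Fin n) : Fin n :=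
  (P.part i).min' ⟨i, P.mem_part (mem_univ i)⟩

lemma toFun_mem (P : Finpartition (Finset.univ : Finset (Fin n))) (i : Fin n) :
    toFun P i ∈ P.part i := Finset.min'_mem _ _

lemma toFun_le (P : Finpartition (Finset.univ : Finset (Fin n))) (i : Fin n) :
    toFun P i ≤ i := Finset.min'_le _ _ (P.mem_part (mem_univ i))

lemma part_toFun (P : Finpartition (Finset.univ : Finset (Fin n))) (i : Fin n) :
    P.part (toFun P i) = P.part i :=
  P.part_eq_of_mem (P.part_mem.2 (mem_univ i)) (toFun_mem P i)

lemma toFun_idem (P : Finpartition (Finset.univ : Finset (Fin n))) (i : Fin n) :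
    toFun P (toFun P i) = toFun P i := by
  unfold toFun
  congr 1
  exact part_toFun P i

lemma toFun_eq_of_part_eq (P : Finpartition (Finset.univ : Finset (Fin n)))
    {i j : Fin n} (h : P.part i = P.part j) : toFun P i = toFun P j := by
  unfold toFun; congr 1

lemma toFun_card (P : Finpartition (Finset.univ : Finset (Fin n))) :
    (Finset.univ.image (toFun P)).card = P.parts.card := by
  apply Finset.card_bij (fun v _ => P.part v)
  · intro v hv
    exact P.part_mem.2 (mem_univ v)
  · intro v hv w hw hvw
    obtain ⟨j, -, rfl⟩ := mem_image.mp hv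
    obtain ⟨j', -, rfl⟩ := mem_image.mp hw
    calc toFun P j = toFun P (toFun P j) := (toFun_idem P j).symm
    _ = toFun P (toFun P j') := toFun_eq_of_part_eq P hvw
    _ = toFun P j' := toFun_idem P j'
  · intro t ht
    obtain ⟨a, ha⟩ := P.nonempty_of_mem_parts ht
    refine ⟨toFun P a, mem_image_of_mem _ (mem_univ a), ?_⟩
    rw [part_toFun]
    exact P.part_eq_of_mem ht ha

lemma toFun_toPart (f : Fin n → Fin n) (hf : ∀ i, f (f i) = f i)
    (hle : ∀ i, f i ≤ i) : toFun (toPart f hf) = f := by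
  funext i
  have hmem : i ∈ blk f (f i) := by simp [blk]
  have hpart : (toPart f hf).part i = blk f (f i) := by
    apply Finpartition.part_eq_of_mem
    · exact mem_image_of_mem _ (mem_image_of_mem f (mem_univ i))
    · exact hmem
  unfold toFun
  apply le_antisymm
  · apply Finset.min'_le
    rw [hpart]
    simp [blk, hf]
  · apply Finset.le_min'
    intro y hy
    rw [hpart] at hy
    simp only [blk, mem_filter] at hy
    rw [← hy.2]
    exact hle y

lemma blk_toFun (P : Finpartition (Finset.univ : Finset (Fin n))) (i : Fin n) :
    blk (toFun P) (toFun P i) = P.part i := by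
  ext j
  simp only [blk, mem_filter, mem_univ, true_and]
  constructor
  · intro hj
    have : P.part j = P.part i := by
      rw [← part_toFun P j, hj, part_toFun]
    rw [← this]
    exact P.mem_part (mem_univ j)
  · intro hj
    have : P.part j = P.part i :=
      ((P.mem_part_iff_part_eq_part (mem_univ j) (mem_univ i)).mp hj)
    exact toFun_eq_of_part_eq P this

lemma toPart_toFun (P : Finpartition (Finset.univ : Finset (Fin n))) :
    toPart (toFun P) (toFun_idem P) = P := by
  apply Finpartition.ext
  show (Finset.univ.image (toFun P)).image (blk (toFun P)) = P.parts
  ext t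
  simp only [mem_image]
  constructor
  · rintro ⟨v, hv, rfl⟩
    obtain ⟨j, -, rfl⟩ := hv
    rw [blk_toFun]
    exact P.part_mem.2 (mem_univ j)
  · intro ht
    obtain ⟨a, ha⟩ := P.nonempty_of_mem_parts ht
    refine ⟨toFun P a, ⟨a, mem_univ a, rfl⟩, ?_⟩
    have : blk (toFun P) (toFun P (toFun P a)) = P.part (toFun P a) := blk_toFun P _
    rw [toFun_idem] at this
    rw [this, part_toFun]
    exact P.part_eq_of_mem ht ha

end ParEquiv

namespace Base

lemma seq00 : Nat.card (SEQ 0 0) = 1 := by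
  haveI : Nonempty (SEQ 0 0) :=
    ⟨⟨fun i => i.elim0, fun i => i.elim0, fun i => i.elim0, by simp [distStat]⟩⟩
  haveI : Subsingleton (SEQ 0 0) := by
    constructor
    rintro ⟨e, -⟩ ⟨e', -⟩
    apply Subtype.ext
    funext i
    exact i.elim0
  exact Nat.card_unique

lemma par00 : Nat.card (PAR 0 0) = 1 := by
  haveI : Nonempty (PAR 0 0) :=
    ⟨⟨fun i => i.elim0, fun i => i.elim0, fun i => i.elim0, by simp⟩⟩
  haveI : Subsingleton (PAR 0 0) := by
    constructor
    rintro ⟨e, -⟩ ⟨e', -⟩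
    apply Subtype.ext
    funext i
    exact i.elim0
  exact Nat.card_unique

lemma seq0succ (k : ℕ) : Nat.card (SEQ 0 (k+1)) = 0 := by
  haveI : IsEmpty (SEQ 0 (k+1)) := by
    constructor
    rintro ⟨e, -, -, hd⟩
    omega
  exact Nat.card_of_isEmpty

lemma par0succ (k : ℕ) : Nat.card (PAR 0 (k+1)) = 0 := by
  haveI : IsEmpty (PAR 0 (k+1)) := by
    constructor
    rintro ⟨f, -, -, hcard⟩
    have : (Finset.univ : Finset (Fin 0)).image f = ∅ := by simp
    rw [this] at hcard
    simp at hcard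
  exact Nat.card_of_isEmpty

lemma seq11 : Nat.card (SEQ 1 1) = 1 := by
  haveI : Nonempty (SEQ 1 1) := by
    refine ⟨⟨fun _ => 0, fun i => Nat.zero_le _, fun i j l _ _ _ => rfl, ?_⟩⟩
    have h1 : (Finset.univ : Finset (Fin 1)).image (fun _ => (0:ℕ)) = {0} := by
      simp
    simp [distStat, h1, Finset.filter_singleton]
  haveI : Subsingleton (SEQ 1 1) := by
    constructor
    rintro ⟨e, he, -⟩ ⟨e', he', -⟩
    apply Subtype.ext
    funext i
    have h1 := he i
    have h2 := he' i
    have h3 : (i : ℕ) = 0 := by omega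
    rw [h3] at h1 h2
    show e i = e' i
    omega
  exact Nat.card_unique

lemma par11 : Nat.card (PAR 1 1) = 1 := by
  haveI : Nonempty (PAR 1 1) := by
    refine ⟨⟨fun _ => 0, fun i => rfl, fun i => i.zero_le, ?_⟩⟩
    simp
  haveI : Subsingleton (PAR 1 1) := by
    constructor
    rintro ⟨f, -⟩ ⟨f', -⟩
    apply Subtype.ext
    funext i
    exact Subsingleton.elim _ _
  exact Nat.card_unique

lemma seq1succ (k : ℕ) : Nat.card (SEQ 1 (k+2)) = 0 := by
  haveI : IsEmpty (SEQ 1 (k+2)) := by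
    constructor
    rintro ⟨e, hle, -, hd⟩
    have h2 : distStat e ≤ 1 := by
      have : ((Finset.univ : Finset (Fin 1)).image e).card ≤ 1 := by
        calc ((Finset.univ : Finset (Fin 1)).image e).card
            ≤ (Finset.univ : Finset (Fin 1)).card := Finset.card_image_le
        _ = 1 := by simp
      calc distStat e ≤ ((Finset.univ : Finset (Fin 1)).image e).card :=
            Finset.card_filter_le _ _
      _ ≤ 1 := this
    omega
  exact Nat.card_of_isEmpty

lemma par1succ (k : ℕ) : Nat.card (PAR 1 (k+2)) = 0 := by
  haveI : IsEmpty (PAR 1 (k+2)) := by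
    constructor
    rintro ⟨f, -, -, hcard⟩
    have : ((Finset.univ : Finset (Fin 1)).image f).card ≤ 1 := by
      calc ((Finset.univ : Finset (Fin 1)).image f).card
          ≤ (Finset.univ : Finset (Fin 1)).card := Finset.card_image_le
      _ = 1 := by simp
    omega
  exact Nat.card_of_isEmpty

end Base

noncomputable def parFinpartEquiv (n k : ℕ) :
    PAR n k ≃ {P : Finpartition (Finset.univ : Finset (Fin n)) // P.parts.card = k} where
  toFun := fun ⟨f, h1, h2, h3⟩ =>
    ⟨ParEquiv.toPart f h1, by rw [ParEquiv.toPart_card]; exact h3⟩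
  invFun := fun ⟨P, hP⟩ =>
    ⟨ParEquiv.toFun P, ParEquiv.toFun_idem P, ParEquiv.toFun_le P,
      by rw [ParEquiv.toFun_card]; exact hP⟩
  left_inv := fun ⟨f, h1, h2, h3⟩ => Subtype.ext (ParEquiv.toFun_toPart f h1 h2)
  right_inv := fun ⟨P, hP⟩ => Subtype.ext (ParEquiv.toPart_toFun P)

lemma par_stirling (n k : ℕ) : Nat.card (PAR n k) = stirling2 n k :=
  Nat.card_congr (parFinpartEquiv n k)

lemma key (n : ℕ) : ∀ k, Nat.card (SEQ n k) = Nat.card (PAR n k) := by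
  induction n using Nat.strong_induction_on with
  | _ n ih =>
    intro k
    rcases n with _ | _ | m
    · rcases k with _ | k
      · rw [Base.seq00, Base.par00]
      · rw [Base.seq0succ, Base.par0succ]
    · rcases k with _ | _ | k
      · rw [SeqRec.seq_zero, ParRec.par_zero]
      · rw [Base.seq11, Base.par11]
      · rw [Base.seq1succ, Base.par1succ]
    · rcases k with _ | k
      · rw [SeqRec.seq_zero, ParRec.par_zero]
      · rw [SeqRec.seq_rec, ParRec.par_rec,
          ih (m+1) (by omega) k, ih (m+1) (by omega) (k+1)]


end Aux

theorem stmt_14 (n k : ℕ) (hk : 1 ≤ k) (hkn : k ≤ n) :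
    Nat.card {e : Fin n → ℕ //
      InvSeq e ∧ Avoids e [0,1,0] ∧ Avoids e [1,0,1] ∧ repStat e = k}
      = stirling2 n k := by
  have hiff : ∀ e : Fin n → ℕ,
      (InvSeq e ∧ Avoids e [0,1,0] ∧ Avoids e [1,0,1] ∧ repStat e = k)
        ↔ ((∀ i : Fin n, e i ≤ (i:ℕ)) ∧ Contig e ∧ distStat e + k = n) := by
    intro e
    have hd : distStat e ≤ n := by
      calc distStat e ≤ ((Finset.univ.image e)).card := Finset.card_filter_le _ _
      _ ≤ (Finset.univ : Finset (Fin n)).card := Finset.card_image_le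
      _ = n := by simp
    constructor
    · rintro ⟨h1, h2, h3, h4⟩
      refine ⟨h1, (avoids_iff_contig e).mp ⟨h2, h3⟩, ?_⟩
      unfold repStat at h4
      omega
    · rintro ⟨h1, h2, h3⟩
      obtain ⟨h2a, h3a⟩ := (avoids_iff_contig e).mpr h2
      exact ⟨h1, h2a, h3a, by unfold repStat; omega⟩
  rw [Nat.card_congr (Equiv.subtypeEquivRight hiff)]
  have h0 : Nat.card {e : Fin n → ℕ //
      (∀ i : Fin n, e i ≤ (i:ℕ)) ∧ Contig e ∧ distStat e + k = n}
      = Nat.card (SEQ n k) := rfl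
  rw [h0, key n k, par_stirling n k]
end
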